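/- arXiv:1604.02188 — 8 statements merged into one kernel-verified Lean document; each statement's English description precedes it below -/
import Mathlib

section
/- Let b ≥ 0. Let p*_1, …, p*_k ∈ P be any assignment, and suppose the assignment p_1, …, p_k ∈ P satisfies the 0-extension guarantee Σ_{i=1}^k dist(p̂_i, p_i) + Σ_{{i,j}∈E} dist(p_i, p_j) ≤ b · (Σ_{i=1}^k dist(p̂_i, p*_i) + Σ_{{i,j}∈E} dist(p*_i, p*_j)). Then the SNN cost of p is at most (2b+1) times the SNN cost of p*: Σ_{i=1}^k dist(q_i, p_i) + Σ_{{i,j}∈E} dist(p_i, p_j) ≤ (2b+1) · (Σ_{i=1}^k dist(q_i, p*_i) + Σ_{{i,j}∈E} dist(p*_i, p*_j)). In particular, any b-approximate assignment for the derived 0-extension instance is a (2b+1)-approximate assignment for the SNN instance. -/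
open Finset

/-- The symmetric pairwise-distance function induced on unordered pairs by an
assignment `p : V → X`. -/
noncomputable def pairDist {V X : Type*} [MetricSpace X] (p : V → X) : Sym2 V → ℝ :=
  Sym2.lift ⟨fun i j => dist (p i) (p j), fun i j => dist_comm (p i) (p j)⟩

/-- if `p` satisfies the `b`-approximate 0-extension guarantee relative to the
assignment `p*` (with the nearest neighbors `p̂` playing the role of terminals), then `p` is a
`(2b+1)`-approximation in SNN cost relative to `p*`. -/
theorem snn_cost_of_zero_extension_guarantee
    {X : Type*} [MetricSpace X] {k : ℕ} (hk : 1 ≤ k)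
    (P : Finset X) (hPne : P.Nonempty)
    (q : Fin k → X) (G : SimpleGraph (Fin k)) [Fintype G.edgeSet]
    (phat : Fin k → X) (hphatP : ∀ i, phat i ∈ P)
    (hphatNN : ∀ i, ∀ p ∈ P, dist (q i) (phat i) ≤ dist (q i) p)
    (b : ℝ) (hb : 0 ≤ b)
    (ps p : Fin k → X) (hpsP : ∀ i, ps i ∈ P) (hpP : ∀ i, p i ∈ P)
    (happrox : ∑ i, dist (phat i) (p i) + ∑ e ∈ G.edgeFinset, pairDist p e ≤
      b * (∑ i, dist (phat i) (ps i) + ∑ e ∈ G.edgeFinset, pairDist ps e)) :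
    ∑ i, dist (q i) (p i) + ∑ e ∈ G.edgeFinset, pairDist p e ≤
      (2 * b + 1) * (∑ i, dist (q i) (ps i) + ∑ e ∈ G.edgeFinset, pairDist ps e) := by
  set A := ∑ i, dist (q i) (ps i) with hA
  set B := ∑ e ∈ G.edgeFinset, pairDist ps e with hB
  have hA0 : 0 ≤ A := Finset.sum_nonneg fun i _ => dist_nonneg
  have hB0 : 0 ≤ B := Finset.sum_nonneg fun e _ => by
    induction e using Sym2.ind with
    | _ i j => exact dist_nonneg
  -- step 1: Σ dist(q,p) ≤ A + Σ dist(phat,p)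
  have h1 : ∑ i, dist (q i) (p i) ≤ A + ∑ i, dist (phat i) (p i) := by
    rw [hA, ← Finset.sum_add_distrib]
    refine Finset.sum_le_sum fun i _ => ?_
    calc dist (q i) (p i) ≤ dist (q i) (phat i) + dist (phat i) (p i) := dist_triangle _ _ _
      _ ≤ dist (q i) (ps i) + dist (phat i) (p i) := by
          linarith [hphatNN i (ps i) (hpsP i)]
  -- step 2: Σ dist(phat,ps) ≤ 2A
  have h2 : ∑ i, dist (phat i) (ps i) ≤ 2 * A := by
    have : ∑ i, dist (phat i) (ps i) ≤ ∑ i, 2 * dist (q i) (ps i) := by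
      refine Finset.sum_le_sum fun i _ => ?_
      calc dist (phat i) (ps i) ≤ dist (phat i) (q i) + dist (q i) (ps i) := dist_triangle _ _ _
        _ ≤ 2 * dist (q i) (ps i) := by
            have := hphatNN i (ps i) (hpsP i)
            rw [dist_comm (phat i) (q i)]; linarith
    rw [hA, Finset.mul_sum]; exact this
  have h3 : ∑ i, dist (phat i) (p i) + ∑ e ∈ G.edgeFinset, pairDist p e ≤
      b * (2 * A + B) := by
    calc ∑ i, dist (phat i) (p i) + ∑ e ∈ G.edgeFinset, pairDist p e
        ≤ b * (∑ i, dist (phat i) (ps i) + B) := happrox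
      _ ≤ b * (2 * A + B) := by
          apply mul_le_mul_of_nonneg_left _ hb; linarith
  nlinarith [h1, h3]
end

section
/- There is a universal constant C > 0 such that the following holds. Let δ ≥ 1 and suppose the metric space (X, dist) has doubling dimension at most δ, i.e. every ball in X can be covered by at most 2^δ balls of half its radius. Then for every SNN instance in X, there exists an assignment p_1, …, p_k with all p_i ∈ P̂ whose SNN cost is at most C · δ · Cost(Q, G, P); i.e., the pruning gap is O(δ). -/
/-!
Take an optimal assignment `x` into `P` and let `gᵢ` be the distance from `xᵢ` to `P̂`; since
`p̂ᵢ` is a nearest neighbour of `qᵢ`, `gᵢ ≤ 2 dist(qᵢ, xᵢ)`. Round `x` into `P̂` by a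
Calinescu–Karloff–Rabani partition at the scale of each vertex: a random shift `θ` gives vertex
`i` a scale `γ = 2^(t + θ) ∈ (gᵢ/2, gᵢ]`, the vertices of each scale class carry a maximal
`γ`-separated net, and `i` goes to the label nearest to the first net point, in a random order,
within a random radius `R ∈ [γ, 2γ)` of `xᵢ`. Then every vertex moves by at most `4 gᵢ`. An edge
of length `D ≪ gᵢ ≤ gⱼ` is cut only if its ends get different classes, with probability
`O(D / gᵢ)`, or are separated by the partition of their class, with probability
`O(D / γ · log n)`, where by doubling `n ≤ 2^(3δ)` bounds the net points within `4γ`. So edges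
are stretched by `O(δ)` on average, and some value of the finitely many random parameters does
as well; `θ` and `R` range over `N = |E| + 1` values, which absorbs the discretisation error.
-/

open Finset

open Metric

theorem pairDist_mk {V X : Type*} [MetricSpace X] (p : V → X) (i j : V) :
    pairDist p s(i, j) = dist (p i) (p j) :=
  rfl

theorem pairDist_nonneg {V X : Type*} [MetricSpace X] (p : V → X) (e : Sym2 V) :
    0 ≤ pairDist p e := by
  induction e using Sym2.ind with
  | _ i j => exact dist_nonneg

theorem card_le_sub_add_one_of_injOn {ι : Type*} {s : Finset ι} {f : ι → ℤ} {u v : ℝ}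
    (hf : Set.InjOn f s) (hs : ∀ a ∈ s, u ≤ f a ∧ (f a : ℝ) ≤ v) (huv : u ≤ v) :
    (#s : ℝ) ≤ v - u + 1 := by
  have hmaps : Set.MapsTo f s (Icc ⌈u⌉ ⌊v⌋ : Finset ℤ) := fun a ha =>
    mem_Icc.2 ⟨Int.ceil_le.2 (hs a ha).1, Int.le_floor.2 (hs a ha).2⟩
  have hceil : ⌈u⌉ ≤ ⌊v⌋ + 1 := by
    have : (⌈u⌉ : ℝ) < ⌊v⌋ + 1 + 1 := by
      linarith [Int.ceil_lt_add_one u, Int.lt_floor_add_one v]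
    exact Int.lt_add_one_iff.1 (by exact_mod_cast this)
  have hcard : ((#(Icc ⌈u⌉ ⌊v⌋) : ℤ) : ℝ) = ⌊v⌋ + 1 - ⌈u⌉ := by
    rw [Int.card_Icc, Int.toNat_of_nonneg (by omega)]
    push_cast
    ring
  calc (#s : ℝ) ≤ #(Icc ⌈u⌉ ⌊v⌋) := by exact_mod_cast card_le_card_of_injOn f hmaps hf
    _ = ⌊v⌋ + 1 - ⌈u⌉ := by exact_mod_cast hcard
    _ ≤ v - u + 1 := by linarith [Int.floor_le v, Int.le_ceil u]

theorem sum_inv_card_filter_le_le_harmonic {ι : Type*} [DecidableEq ι] (s : Finset ι)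
    (f : ι → ℝ) : ∑ a ∈ s, (#{b ∈ s | f b ≤ f a} : ℝ)⁻¹ ≤ harmonic #s := by
  induction s using Finset.induction_on_max_value f with
  | empty => simp
  | insert a s ha hmax ih =>
    have htop : #{b ∈ insert a s | f b ≤ f a} = #s + 1 := by
      rw [filter_true_of_mem fun b hb => ?_, card_insert_of_notMem ha]
      rcases mem_insert.1 hb with rfl | hb
      exacts [le_rfl, hmax b hb]
    have hrest : ∀ b ∈ s,
        (#{c ∈ insert a s | f c ≤ f b} : ℝ)⁻¹ ≤ (#{c ∈ s | f c ≤ f b} : ℝ)⁻¹ :=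
      fun b hb => inv_anti₀ (Nat.cast_pos.2 <| card_pos.2 ⟨b, mem_filter.2 ⟨hb, le_refl (f b)⟩⟩)
        (by exact_mod_cast card_le_card (filter_subset_filter _ (subset_insert a s)))
    rw [sum_insert ha, htop, card_insert_of_notMem ha, harmonic_succ]
    push_cast
    linarith [sum_le_sum hrest]

theorem card_perm_forall_le_mul_card_le {α : Type*} [Fintype α] [LinearOrder α]
    (s : Finset α) {a : α} (ha : a ∈ s) :
    #{π : Equiv.Perm α | ∀ b ∈ s, π a ≤ π b} * #s ≤ Fintype.card (Equiv.Perm α) := by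
  set E : α → Finset (Equiv.Perm α) := fun a => {π | ∀ b ∈ s, π a ≤ π b}
  have hcard : ∀ b ∈ s, #(E b) = #(E a) := fun b hb => by
    have hswap : ∀ c ∈ s, Equiv.swap a b c ∈ s := fun c hc => by
      rw [Equiv.swap_apply_def]
      split_ifs <;> assumption
    refine card_equiv (Equiv.mulRight (Equiv.swap a b)) fun π => ?_
    simp only [E, mem_filter, mem_univ, true_and, Equiv.coe_mulRight, Equiv.Perm.coe_mul,
      Function.comp_apply, Equiv.swap_apply_left]
    exact ⟨fun h c hc => h _ (hswap c hc), fun h c hc => by simpa using h _ (hswap c hc)⟩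
  have hdisj : (s : Set α).PairwiseDisjoint E := fun b hb c hc hbc =>
    disjoint_left.2 fun π hπb hπc => hbc <| π.injective <|
      le_antisymm ((mem_filter.1 hπb).2 c hc) ((mem_filter.1 hπc).2 b hb)
  calc #(E a) * #s = ∑ b ∈ s, #(E b) := by
        rw [sum_congr rfl hcard, sum_const, smul_eq_mul, mul_comm]
    _ = #(s.biUnion E) := (card_biUnion hdisj).symm
    _ ≤ Fintype.card (Equiv.Perm α) := card_le_univ _

theorem sum_le_card_filter_mul_add {α : Type*} {s : Finset α} {p : α → Prop} [DecidablePred p]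
    {f : α → ℝ} {M M' : ℝ} (hf : ∀ a ∈ s, f a ≤ (if p a then M else 0) + M') :
    ∑ a ∈ s, f a ≤ #{a ∈ s | p a} * M + #s * M' := by
  refine (sum_le_sum hf).trans_eq ?_
  rw [sum_add_distrib, sum_ite, sum_const, sum_const_zero, sum_const, add_zero,
    nsmul_eq_mul, nsmul_eq_mul]

theorem exists_separated_net {ι X : Type*} [PseudoMetricSpace X] [DecidableEq ι] (x : ι → X)
    {γ : ℝ} (hγ : 0 ≤ γ) (s : Finset ι) :
    ∃ t ⊆ s, (t : Set ι).Pairwise (fun a b => γ < dist (x a) (x b)) ∧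
      ∀ a ∈ s, ∃ b ∈ t, dist (x a) (x b) ≤ γ := by
  set separated := s.powerset.filter fun t : Finset ι =>
    (t : Set ι).Pairwise fun a b => γ < dist (x a) (x b)
  obtain ⟨t, ht, hmax⟩ := exists_max_image separated card ⟨∅, by simp [separated]⟩
  obtain ⟨hts, hsep⟩ := mem_filter.1 ht
  refine ⟨t, mem_powerset.1 hts, hsep, fun a ha => ?_⟩
  by_contra! hfar
  have hat : a ∉ t := fun hat => (hfar a hat).not_ge (by simpa using hγ)
  have hins : insert a t ∈ separated := by
    refine mem_filter.2 ⟨mem_powerset.2 (insert_subset ha (mem_powerset.1 hts)), ?_⟩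
    rw [coe_insert]
    exact hsep.insert fun b hb _ => ⟨hfar b hb, by rw [dist_comm]; exact hfar b hb⟩
  have := hmax _ hins
  rw [card_insert_of_notMem hat] at this
  omega

def HasDoublingCovers (X : Type*) [PseudoMetricSpace X] (c : ℝ) : Prop :=
  ∀ (x : X) (R : ℝ), ∃ s : Finset X, (#s : ℝ) ≤ c ∧ ∀ z ∈ ball x R, ∃ y ∈ s, z ∈ ball y (R / 2)

namespace HasDoublingCovers

variable {X : Type*} [PseudoMetricSpace X] {c : ℝ}

theorem one_le (h : HasDoublingCovers X c) (x : X) : 1 ≤ c := by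
  obtain ⟨s, hs, hcov⟩ := h x 1
  obtain ⟨y, hy, -⟩ := hcov x (mem_ball_self one_pos)
  exact le_trans (by exact_mod_cast card_pos.2 ⟨y, hy⟩) hs

theorem log_nonneg (h : HasDoublingCovers X c) (x : X) : 0 ≤ Real.log c :=
  Real.log_nonneg (h.one_le x)

theorem exists_cover_pow (h : HasDoublingCovers X c) (x : X) (R : ℝ) (m : ℕ) :
    ∃ s : Finset X, (#s : ℝ) ≤ c ^ m ∧ ∀ z ∈ ball x R, ∃ y ∈ s, z ∈ ball y (R / 2 ^ m) := by
  classical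
  induction m with
  | zero => exact ⟨{x}, by simp, fun z hz => ⟨x, mem_singleton_self x, by simpa using hz⟩⟩
  | succ m ih =>
    obtain ⟨s, hs, hcov⟩ := ih
    choose! t ht htcov using fun y => h y (R / 2 ^ m)
    have hc : 0 ≤ c := le_trans (by positivity) (ht x)
    refine ⟨s.biUnion t, ?_, fun z hz => ?_⟩
    · calc (#(s.biUnion t) : ℝ) ≤ ∑ y ∈ s, (#(t y) : ℝ) := by exact_mod_cast card_biUnion_le
        _ ≤ ∑ _y ∈ s, c := sum_le_sum fun y _ => ht y
        _ ≤ c ^ m * c := by rw [sum_const, nsmul_eq_mul]; gcongr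
        _ = c ^ (m + 1) := (pow_succ c m).symm
    · obtain ⟨y, hy, hzy⟩ := hcov z hz
      obtain ⟨y', hy', hzy'⟩ := htcov y z hzy
      exact ⟨y', mem_biUnion.2 ⟨y, hy, hy'⟩, by rwa [pow_succ, ← div_div]⟩

theorem card_le_of_pairwise_lt_dist (h : HasDoublingCovers X c) {ι : Type*} (x : ι → X)
    {t : Finset ι} {γ : ℝ} (hsep : (t : Set ι).Pairwise (fun a b => γ < dist (x a) (x b)))
    (z : X) (ht : ∀ a ∈ t, dist (x a) z < 4 * γ) : (#t : ℝ) ≤ c ^ 3 := by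
  obtain ⟨s, hs, hcov⟩ := h.exists_cover_pow z (4 * γ) 3
  have hcov' : ∀ a ∈ t, ∃ y ∈ s, x a ∈ ball y (4 * γ / 2 ^ 3) :=
    fun a ha => hcov (x a) (mem_ball.2 (ht a ha))
  have : Nonempty X := ⟨z⟩
  choose! center hcenter hball using hcov'
  have hinj : Set.InjOn center t := fun a ha b hb hab => by
    by_contra hne
    have ha' := mem_ball.1 (hball a ha)
    have hb' := mem_ball'.1 (hball b hb)
    rw [hab] at ha'
    exact (hsep ha hb hne).not_ge ((dist_triangle _ _ _).trans (by linarith))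
  calc (#t : ℝ) ≤ #s := by exact_mod_cast card_le_card_of_injOn center hcenter hinj
    _ ≤ c ^ 3 := hs

end HasDoublingCovers

namespace SNN

noncomputable def scaleClass (θ g : ℝ) : ℤ := ⌊Real.logb 2 g - θ⌋

noncomputable def scale (θ : ℝ) (t : ℤ) : ℝ := 2 ^ ((t : ℝ) + θ)

theorem scale_pos (θ : ℝ) (t : ℤ) : 0 < scale θ t := Real.rpow_pos_of_pos two_pos _

theorem scale_scaleClass_le {θ g : ℝ} (hg : 0 < g) : scale θ (scaleClass θ g) ≤ g := by
  calc scale θ (scaleClass θ g) ≤ 2 ^ Real.logb 2 g :=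
        Real.rpow_le_rpow_of_exponent_le one_le_two
          (by unfold scaleClass; linarith [Int.floor_le (Real.logb 2 g - θ)])
    _ = g := Real.rpow_logb two_pos (by norm_num) hg

theorem lt_two_mul_scale_scaleClass {θ g : ℝ} (hg : 0 < g) :
    g < 2 * scale θ (scaleClass θ g) := by
  calc g = 2 ^ Real.logb 2 g := (Real.rpow_logb two_pos (by norm_num) hg).symm
    _ < 2 ^ ((scaleClass θ g : ℝ) + θ + 1) :=
        Real.rpow_lt_rpow_of_exponent_lt one_lt_two
          (by unfold scaleClass; linarith [Int.lt_floor_add_one (Real.logb 2 g - θ)])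
    _ = 2 * scale θ (scaleClass θ g) := by rw [Real.rpow_add_one two_ne_zero, mul_comm]; rfl

theorem card_floor_sub_ne_le {N : ℕ} (hN : 0 < N) {a b : ℝ} (hab : a ≤ b) :
    (#{s : Fin N | ⌊a - s / N⌋ ≠ ⌊b - s / N⌋} : ℝ) ≤ N * (b - a) + 1 := by
  have hN' : (0 : ℝ) < N := Nat.cast_pos.2 hN
  -- when the floors differ, `m s` is an integer in `(N a, N b]`, and `s` is its residue mod `N`
  set m : Fin N → ℤ := fun s => ⌊b - s / N⌋ * N + s
  have hmod : ∀ s, m s % N = s := fun s => by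
    rw [show m s = s + ⌊b - s / N⌋ * N from add_comm _ _, Int.add_mul_emod_self_right]
    exact Int.emod_eq_of_lt (by positivity) (by exact_mod_cast s.2)
  have hinj : Function.Injective m := fun s s' h => by
    have := hmod s'
    rw [← h, hmod s] at this
    exact Fin.ext (by exact_mod_cast this)
  have hmem : ∀ s ∈ ({s : Fin N | ⌊a - s / N⌋ ≠ ⌊b - s / N⌋} : Finset (Fin N)),
      N * a ≤ m s ∧ (m s : ℝ) ≤ N * b := fun s hs => by
    have hlt : ⌊a - s / N⌋ < ⌊b - s / N⌋ :=
      lt_of_le_of_ne (Int.floor_le_floor (by linarith)) (mem_filter.1 hs).2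
    have h1 : a - s / N < ⌊b - s / N⌋ := Int.floor_lt.1 hlt
    have h2 : (⌊b - s / N⌋ : ℝ) ≤ b - s / N := Int.floor_le _
    have hms : (m s : ℝ) = ⌊b - s / N⌋ * N + s := by simp [m]
    rw [hms]
    constructor <;> nlinarith [mul_div_cancel₀ (s : ℝ) hN'.ne']
  have := card_le_sub_add_one_of_injOn hinj.injOn hmem (by gcongr)
  linarith

theorem _root_.Real.logb_two_le_of_one_le {x : ℝ} (hx : 1 ≤ x) :
    Real.logb 2 x ≤ 3 / 2 * (x - 1) := by
  rw [Real.logb, div_le_iff₀ (Real.log_pos one_lt_two)]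
  nlinarith [Real.log_le_sub_one_of_pos (by linarith : 0 < x), Real.log_two_gt_d9]

theorem card_scaleClass_ne_le {N : ℕ} (hN : 0 < N) {A B : ℝ} (hA : 0 < A) (hAB : A ≤ B) :
    (#{s : Fin N | scaleClass (s / N) A ≠ scaleClass (s / N) B} : ℝ) ≤
      3 / 2 * N * ((B - A) / A) + 1 := by
  have hlog : Real.logb 2 B - Real.logb 2 A ≤ 3 / 2 * ((B - A) / A) := by
    rw [← Real.logb_div (hA.trans_le hAB).ne' hA.ne']
    calc Real.logb 2 (B / A) ≤ 3 / 2 * (B / A - 1) :=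
          Real.logb_two_le_of_one_le ((one_le_div hA).2 hAB)
      _ = 3 / 2 * ((B - A) / A) := by field_simp
  have := card_floor_sub_ne_le hN (Real.logb_le_logb_of_le one_lt_two hA hAB)
  have hN : (0 : ℝ) ≤ N := N.cast_nonneg
  unfold scaleClass
  nlinarith

theorem mul_one_add_div_mem_Icc {N : ℕ} {γ : ℝ} (hγ : 0 ≤ γ) (r : Fin N) :
    γ * (1 + r / N) ∈ Set.Icc γ (2 * γ) := by
  have : (r : ℝ) / N ≤ 1 := div_le_one_of_le₀ (by exact_mod_cast r.2.le) (Nat.cast_nonneg N)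
  constructor <;> nlinarith [show (0 : ℝ) ≤ r / N by positivity]

theorem card_radius_window_le {N : ℕ} (hN : 0 < N) {γ : ℝ} (hγ : 0 < γ) (a : ℝ) {D : ℝ}
    (hD : 0 ≤ D) :
    (#{r : Fin N | a ≤ γ * (1 + r / N) ∧ γ * (1 + r / N) ≤ a + D} : ℝ) ≤ D * N / γ + 1 := by
  have hγN : 0 < γ / N := div_pos hγ (Nat.cast_pos.2 hN)
  have hr : ∀ r : ℝ, γ * (1 + r / N) = γ + γ / N * r := fun r => by ring
  have key := card_le_sub_add_one_of_injOn (f := fun r : Fin N => (r : ℤ))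
    (s := {r : Fin N | a ≤ γ * (1 + r / N) ∧ γ * (1 + r / N) ≤ a + D})
    (u := (a - γ) / (γ / N)) (v := (a - γ) / (γ / N) + D / (γ / N))
    (fun r _ r' _ h => Fin.ext (by simpa using h))
    (fun r hr' => by
      obtain ⟨h1, h2⟩ := (mem_filter.1 hr').2
      rw [hr] at h1 h2
      simp only [Int.cast_natCast]
      constructor
      · rw [div_le_iff₀ hγN]; linarith
      · rw [← add_div, le_div_iff₀ hγN]; linarith)
    (le_add_of_nonneg_right (div_nonneg hD hγN.le))
  calc _ ≤ _ := key
    _ = D * N / γ + 1 := by field_simp; ring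

section Clustering

variable {V X : Type*} [PseudoMetricSpace X]

noncomputable def nearCenters (x : V → X) (C : Finset V) (z : X) (R : ℝ) : Finset V :=
  {w ∈ C | dist z (x w) ≤ R}

theorem mem_nearCenters {x : V → X} {C : Finset V} {z : X} {R : ℝ} {w : V} :
    w ∈ nearCenters x C z R ↔ w ∈ C ∧ dist z (x w) ≤ R :=
  mem_filter

noncomputable def distToPair (x : V → X) (u v : X) (w : V) : ℝ := min (dist u (x w)) (dist v (x w))

theorem distToPair_comm (x : V → X) (u v : X) : distToPair x u v = distToPair x v u :=
  funext fun _ => min_comm _ _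

theorem log_card_filter_distToPair_le {c : ℝ} (hc : HasDoublingCovers X c) {x : V → X}
    {C : Finset V} {γ : ℝ} (hsep : (C : Set V).Pairwise fun a b => γ < dist (x a) (x b))
    {u v : X} (huv : dist u v < 2 * γ) :
    Real.log #{w ∈ C | distToPair x u v w ≤ 2 * γ} ≤ 3 * Real.log c := by
  rcases eq_empty_or_nonempty {w ∈ C | distToPair x u v w ≤ 2 * γ} with h | h
  · simp [h, hc.log_nonneg u]
  have hpack : (#{w ∈ C | distToPair x u v w ≤ 2 * γ} : ℝ) ≤ c ^ 3 := by
    refine hc.card_le_of_pairwise_lt_dist x (hsep.mono (filter_subset _ _)) u fun w hw => ?_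
    rcases min_le_iff.1 (mem_filter.1 hw).2 with h | h
    · rw [dist_comm]; linarith [dist_nonneg (x := u) (y := v)]
    · linarith [dist_triangle (x w) v u, dist_comm (x w) v, dist_comm v u]
  calc _ ≤ Real.log (c ^ 3) := Real.log_le_log (Nat.cast_pos.2 (card_pos.2 h)) hpack
    _ = 3 * Real.log c := by rw [Real.log_pow]; norm_num

variable [LinearOrder V]

noncomputable def firstBy (π : Equiv.Perm V) (c : Finset V) (d : V) : V :=
  if h : c.Nonempty then (c.exists_min_image π h).choose else d

theorem firstBy_spec (π : Equiv.Perm V) {c : Finset V} (d : V) (h : c.Nonempty) :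
    firstBy π c d ∈ c ∧ ∀ w ∈ c, π (firstBy π c d) ≤ π w := by
  rw [firstBy, dif_pos h]
  exact (c.exists_min_image π h).choose_spec

theorem cut_witness {x : V → X} {C : Finset V} {π : Equiv.Perm V} {u v : X} {R : ℝ} {a b : V}
    (ha : a ∈ nearCenters x C u R ∧ ∀ w ∈ nearCenters x C u R, π a ≤ π w)
    (hb : b ∈ nearCenters x C v R ∧ ∀ w ∈ nearCenters x C v R, π b ≤ π w) (hab : π a < π b) :
    distToPair x u v a ≤ R ∧ R ≤ distToPair x u v a + dist u v ∧
      ∀ w ∈ C, distToPair x u v w ≤ distToPair x u v a → π a ≤ π w := by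
  obtain ⟨haC, hua⟩ := mem_nearCenters.1 ha.1
  have hva : R < dist v (x a) := by
    by_contra! h
    exact (hb.2 a (mem_nearCenters.2 ⟨haC, h⟩)).not_gt hab
  have hmin : distToPair x u v a = dist u (x a) := min_eq_left (hua.trans hva.le)
  rw [hmin]
  refine ⟨hua, by linarith [dist_triangle v u (x a), dist_comm u v], fun w hw hα => ?_⟩
  rcases min_le_iff.1 (hα.trans hua) with h | h
  · exact ha.2 w (mem_nearCenters.2 ⟨hw, h⟩)
  · exact hab.le.trans (hb.2 w (mem_nearCenters.2 ⟨hw, h⟩))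

/-- Calinescu–Karloff–Rabani: the radius must fall in a window of length `dist u v`, and the
witness `w` must precede the centres nearer to `{u, v}`, which happens for a `1 / rank` fraction
of the orders; the ranks sum to a harmonic number. -/
theorem card_firstBy_ne_le [Fintype V] {c : ℝ} (hc : HasDoublingCovers X c) {x : V → X}
    {C : Finset V} {N : ℕ} (hN : 0 < N) {γ : ℝ} (hγ : 0 < γ)
    (hsep : (C : Set V).Pairwise fun a b => γ < dist (x a) (x b)) {u v : X}
    (hu : ∃ w ∈ C, dist u (x w) ≤ γ) (hv : ∃ w ∈ C, dist v (x w) ≤ γ) (huv : dist u v < 2 * γ)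
    (d d' : V) :
    (#{p : Fin N × Equiv.Perm V | firstBy p.2 (nearCenters x C u (γ * (1 + p.1 / N))) d ≠
        firstBy p.2 (nearCenters x C v (γ * (1 + p.1 / N))) d'} : ℝ) ≤
      (dist u v * N / γ + 1) * Fintype.card (Equiv.Perm V) * (1 + 3 * Real.log c) := by
  set D := dist u v
  set ρ : Fin N → ℝ := fun r => γ * (1 + r / N)
  set α := distToPair x u v
  set C' := {w ∈ C | α w ≤ 2 * γ}
  set S : V → Finset V := fun w => {w' ∈ C' | α w' ≤ α w}
  set radii : V → Finset (Fin N) := fun w => {r | α w ≤ ρ r ∧ ρ r ≤ α w + D}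
  set perms : V → Finset (Equiv.Perm V) := fun w => {π | ∀ w' ∈ S w, π w ≤ π w'}
  have hfirst : ∀ (z : X) r π (e : V), (∃ w ∈ C, dist z (x w) ≤ γ) →
      firstBy π (nearCenters x C z (ρ r)) e ∈ nearCenters x C z (ρ r) ∧
        ∀ w ∈ nearCenters x C z (ρ r), π (firstBy π (nearCenters x C z (ρ r)) e) ≤ π w :=
    fun z r π e ⟨w, hw, hzw⟩ => firstBy_spec π e
      ⟨w, mem_nearCenters.2 ⟨hw, hzw.trans (mul_one_add_div_mem_Icc hγ.le r).1⟩⟩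
  have hsub : ({p : Fin N × Equiv.Perm V | firstBy p.2 (nearCenters x C u (ρ p.1)) d ≠
      firstBy p.2 (nearCenters x C v (ρ p.1)) d'} : Finset _) ⊆
        C'.biUnion fun w => radii w ×ˢ perms w := by
    rintro ⟨r, π⟩ hp
    have ha := hfirst u r π d hu
    have hb := hfirst v r π d' hv
    obtain ⟨a, haC, h1, h2, h3⟩ : ∃ a ∈ C, α a ≤ ρ r ∧ ρ r ≤ α a + D ∧
        ∀ w ∈ C, α w ≤ α a → π a ≤ π w := by
      rcases lt_or_gt_of_ne (π.injective.ne (mem_filter.1 hp).2) with hlt | hlt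
      · exact ⟨_, (mem_nearCenters.1 ha.1).1, cut_witness ha hb hlt⟩
      · have := cut_witness hb ha hlt
        rw [distToPair_comm x v u, dist_comm v u] at this
        exact ⟨_, (mem_nearCenters.1 hb.1).1, this⟩
    exact mem_biUnion.2 ⟨a, mem_filter.2 ⟨haC, h1.trans (mul_one_add_div_mem_Icc hγ.le r).2⟩,
      mem_product.2 ⟨mem_filter.2 ⟨mem_univ _, h1, h2⟩, mem_filter.2 ⟨mem_univ _,
        fun w hw => h3 w (mem_filter.1 (mem_filter.1 hw).1).1 (mem_filter.1 hw).2⟩⟩⟩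
  have hperms : ∀ w ∈ C', (#(perms w) : ℝ) ≤ Fintype.card (Equiv.Perm V) * (#(S w) : ℝ)⁻¹ :=
    fun w hw => by
      have hwS : w ∈ S w := mem_filter.2 ⟨hw, le_rfl⟩
      rw [← div_eq_mul_inv, le_div_iff₀ (Nat.cast_pos.2 (card_pos.2 ⟨w, hwS⟩))]
      exact_mod_cast card_perm_forall_le_mul_card_le (S w) hwS
  have hharm : ∑ w ∈ C', (#(S w) : ℝ)⁻¹ ≤ 1 + 3 * Real.log c :=
    ((sum_inv_card_filter_le_le_harmonic C' α).trans (harmonic_le_one_add_log _)).trans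
      (by linarith [log_card_filter_distToPair_le hc hsep huv])
  calc _ ≤ (#(C'.biUnion fun w => radii w ×ˢ perms w) : ℝ) := by exact_mod_cast card_le_card hsub
    _ ≤ ∑ w ∈ C', (#(radii w ×ˢ perms w) : ℝ) := by exact_mod_cast card_biUnion_le
    _ = ∑ w ∈ C', (#(radii w) : ℝ) * #(perms w) := by push_cast [card_product]; rfl
    _ ≤ ∑ w ∈ C', (D * N / γ + 1) * (Fintype.card (Equiv.Perm V) * (#(S w) : ℝ)⁻¹) :=
        sum_le_sum fun w hw => mul_le_mul (card_radius_window_le hN hγ (α w) dist_nonneg)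
          (hperms w hw) (by positivity) (by positivity)
    _ = (D * N / γ + 1) * Fintype.card (Equiv.Perm V) * ∑ w ∈ C', (#(S w) : ℝ)⁻¹ := by
        rw [mul_sum]; exact sum_congr rfl fun _ _ => (mul_assoc _ _ _).symm
    _ ≤ _ := by gcongr

end Clustering

abbrev RoundingSeed (V : Type*) (N : ℕ) := Fin N × Fin N × Equiv.Perm V

section Rounding

variable {V ι X : Type*} [Fintype V] [LinearOrder V] [Fintype ι] [Nonempty ι]
  [PseudoMetricSpace X]

noncomputable def nearestLabel (y : ι → X) (z : X) : ι :=
  (Finite.exists_min fun j => dist z (y j)).choose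

noncomputable def labelDist (y : ι → X) (z : X) : ℝ := dist z (y (nearestLabel y z))

theorem labelDist_nonneg (y : ι → X) (z : X) : 0 ≤ labelDist y z := dist_nonneg

theorem labelDist_le (y : ι → X) (z : X) (j : ι) : labelDist y z ≤ dist z (y j) :=
  (Finite.exists_min fun j => dist z (y j)).choose_spec j

theorem labelDist_le_dist_add (y : ι → X) (z z' : X) :
    labelDist y z ≤ dist z z' + labelDist y z' :=
  (labelDist_le y z _).trans (dist_triangle _ _ _)

variable (x : V → X) (y : ι → X)

noncomputable def vertexClass (θ : ℝ) (i : V) : ℤ := scaleClass θ (labelDist y (x i))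

noncomputable def classMembers (θ : ℝ) (t : ℤ) : Finset V :=
  {i | 0 < labelDist y (x i) ∧ vertexClass x y θ i = t}

noncomputable def classNet (θ : ℝ) (t : ℤ) : Finset V :=
  (exists_separated_net x (scale_pos θ t).le (classMembers x y θ t)).choose

theorem classNet_spec (θ : ℝ) (t : ℤ) :
    classNet x y θ t ⊆ classMembers x y θ t ∧
      (classNet x y θ t : Set V).Pairwise (fun a b => scale θ t < dist (x a) (x b)) ∧
      ∀ a ∈ classMembers x y θ t, ∃ b ∈ classNet x y θ t, dist (x a) (x b) ≤ scale θ t :=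
  (exists_separated_net x (scale_pos θ t).le (classMembers x y θ t)).choose_spec

variable (N : ℕ)

/-- The seed `(b, r, π)` fixes the scale shift `b / N`, the radius factor `1 + r / N` and the
priority order `π`. -/
noncomputable def clusterCenter (ω : RoundingSeed V N) (i : V) : V :=
  if 0 < labelDist y (x i) then
    firstBy ω.2.2 (nearCenters x (classNet x y (ω.1 / N) (vertexClass x y (ω.1 / N) i)) (x i)
      (scale (ω.1 / N) (vertexClass x y (ω.1 / N) i) * (1 + ω.2.1 / N))) i
  else i

noncomputable def roundLabel (ω : RoundingSeed V N) (i : V) : ι :=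
  nearestLabel y (x (clusterCenter x y N ω i))

variable {N}

theorem clusterCenter_of_pos (b r : Fin N) (π : Equiv.Perm V) {i : V}
    (hi : 0 < labelDist y (x i)) :
    clusterCenter x y N (b, r, π) i =
      firstBy π (nearCenters x (classNet x y (b / N) (vertexClass x y (b / N) i)) (x i)
        (scale (b / N) (vertexClass x y (b / N) i) * (1 + r / N))) i :=
  if_pos hi

theorem dist_roundLabel_le (ω : RoundingSeed V N) (i : V) :
    dist (x i) (y (roundLabel x y N ω i)) ≤ 4 * labelDist y (x i) := by
  rcases (labelDist_nonneg y (x i)).lt_or_eq with hi | hi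
  · obtain ⟨b, r, π⟩ := ω
    set θ : ℝ := b / N
    set γ := scale θ (vertexClass x y θ i)
    obtain ⟨hsub, -, hcov⟩ := classNet_spec x y θ (vertexClass x y θ i)
    obtain ⟨hR1, hR2⟩ := mul_one_add_div_mem_Icc (scale_pos θ (vertexClass x y θ i)).le r
    obtain ⟨w, hw, hiw⟩ := hcov i (mem_filter.2 ⟨mem_univ _, hi, rfl⟩)
    obtain ⟨ha, -⟩ := firstBy_spec π i ⟨w, mem_nearCenters.2 ⟨hw, hiw.trans hR1⟩⟩
    obtain ⟨haN, hia⟩ := mem_nearCenters.1 ha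
    obtain ⟨-, ha0, hacls⟩ := mem_filter.1 (hsub haN)
    have hga := lt_two_mul_scale_scaleClass (θ := θ) ha0
    rw [← vertexClass, hacls] at hga
    have hγi : γ ≤ labelDist y (x i) := scale_scaleClass_le hi
    rw [roundLabel, clusterCenter_of_pos x y b r π hi]
    calc _ ≤ _ := dist_triangle _ _ _
      _ ≤ 2 * γ + 2 * γ := add_le_add (hia.trans hR2) hga.le
      _ ≤ _ := by linarith
  · have hcenter : clusterCenter x y N ω i = i := if_neg (hi ▸ lt_irrefl 0)
    rw [roundLabel, hcenter]
    show labelDist y (x i) ≤ _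
    rw [← hi]
    norm_num

theorem dist_roundLabel_roundLabel_le (ω : RoundingSeed V N) (i j : V) :
    dist (y (roundLabel x y N ω i)) (y (roundLabel x y N ω j)) ≤
      4 * labelDist y (x i) + dist (x i) (x j) + 4 * labelDist y (x j) := by
  have hi := dist_roundLabel_le x y ω i
  have hj := dist_roundLabel_le x y ω j
  rw [dist_comm] at hi
  linarith [dist_triangle4 (y (roundLabel x y N ω i)) (x i) (x j) (y (roundLabel x y N ω j))]

theorem sum_dist_roundLabel_le_of_vertexClass_eq {c : ℝ} (hc : HasDoublingCovers X c)
    (hN : 0 < N) (b : Fin N) {i j : V} (hi : 0 < labelDist y (x i))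
    (hj : 0 < labelDist y (x j)) (hij : vertexClass x y (b / N) i = vertexClass x y (b / N) j)
    (hD : 2 * dist (x i) (x j) ≤ labelDist y (x i)) :
    ∑ p : Fin N × Equiv.Perm V,
        dist (y (roundLabel x y N (b, p) i)) (y (roundLabel x y N (b, p) j)) ≤
      17 * (1 + 3 * Real.log c) * Fintype.card (Equiv.Perm V) *
        (dist (x i) (x j) * N + labelDist y (x i)) := by
  set θ : ℝ := b / N
  set t := vertexClass x y θ i
  set γ := scale θ t
  have hγ : 0 < γ := scale_pos θ t
  have hγi : γ ≤ labelDist y (x i) := scale_scaleClass_le hi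
  have hi2 : labelDist y (x i) < 2 * γ := lt_two_mul_scale_scaleClass hi
  have hj2 : labelDist y (x j) < 2 * γ := by
    have := lt_two_mul_scale_scaleClass (θ := θ) hj
    rwa [← vertexClass, ← hij] at this
  obtain ⟨-, hsep, hcov⟩ := classNet_spec x y θ t
  have hW : ∀ p ∈ (univ : Finset (Fin N × Equiv.Perm V)),
      dist (y (roundLabel x y N (b, p) i)) (y (roundLabel x y N (b, p) j)) ≤
        (if clusterCenter x y N (b, p) i ≠ clusterCenter x y N (b, p) j then 17 * γ else 0) +
          0 := by
    intro p _
    split_ifs with hne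
    · linarith [dist_roundLabel_roundLabel_le x y (b, p) i j]
    · simp [roundLabel, not_not.1 hne]
  have hcenter_i : ∀ p : Fin N × Equiv.Perm V, clusterCenter x y N (b, p) i =
      firstBy p.2 (nearCenters x (classNet x y θ t) (x i) (γ * (1 + p.1 / N))) i :=
    fun p => clusterCenter_of_pos x y b p.1 p.2 hi
  have hcenter_j : ∀ p : Fin N × Equiv.Perm V, clusterCenter x y N (b, p) j =
      firstBy p.2 (nearCenters x (classNet x y θ t) (x j) (γ * (1 + p.1 / N))) j :=
    fun p => by rw [clusterCenter_of_pos x y b p.1 p.2 hj, ← hij]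
  have hcut := card_firstBy_ne_le hc hN hγ hsep (hcov i (mem_filter.2 ⟨mem_univ _, hi, rfl⟩))
    (hcov j (mem_filter.2 ⟨mem_univ _, hj, hij.symm⟩)) (by linarith) i j
  simp only [← hcenter_i, ← hcenter_j] at hcut
  calc _ ≤ _ := sum_le_card_filter_mul_add hW
    _ ≤ (dist (x i) (x j) * N / γ + 1) * Fintype.card (Equiv.Perm V) * (1 + 3 * Real.log c) *
          (17 * γ) := by
        rw [mul_zero, add_zero]
        gcongr
    _ = 17 * (1 + 3 * Real.log c) * Fintype.card (Equiv.Perm V) *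
          (dist (x i) (x j) * N + γ) := by field_simp
    _ ≤ _ := by
        have := hc.log_nonneg (x i)
        gcongr

theorem sum_dist_roundLabel_fiber_le {c : ℝ} (hc : HasDoublingCovers X c) (hN : 0 < N)
    (b : Fin N) {i j : V} (hi : 0 < labelDist y (x i))
    (hij : labelDist y (x i) ≤ labelDist y (x j)) (hD : 2 * dist (x i) (x j) ≤ labelDist y (x i)) :
    ∑ p : Fin N × Equiv.Perm V,
        dist (y (roundLabel x y N (b, p) i)) (y (roundLabel x y N (b, p) j)) ≤
      (if vertexClass x y (b / N) i ≠ vertexClass x y (b / N) j then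
          N * Fintype.card (Equiv.Perm V) * (9 * labelDist y (x j)) else 0) +
        17 * (1 + 3 * Real.log c) * Fintype.card (Equiv.Perm V) *
          (dist (x i) (x j) * N + labelDist y (x i)) := by
  have hrest : 0 ≤ 17 * (1 + 3 * Real.log c) * Fintype.card (Equiv.Perm V) *
      (dist (x i) (x j) * N + labelDist y (x i)) := by
    have := hc.log_nonneg (x i)
    positivity
  split_ifs with hne
  · calc _ ≤ Fintype.card (Fin N × Equiv.Perm V) • (9 * labelDist y (x j)) :=
          sum_le_card_nsmul _ _ _ fun p _ => by
            linarith [dist_roundLabel_roundLabel_le x y (b, p) i j,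
              dist_nonneg (x := x i) (y := x j)]
      _ = N * Fintype.card (Equiv.Perm V) * (9 * labelDist y (x j)) := by simp
      _ ≤ _ := le_add_of_nonneg_right hrest
  · rw [zero_add]
    exact sum_dist_roundLabel_le_of_vertexClass_eq x y hc hN b hi (hi.trans_le hij)
      (not_not.1 hne) hD

theorem sum_dist_roundLabel_le_of_le {c : ℝ} (hc : HasDoublingCovers X c) (hN : 0 < N)
    {i j : V} (hij : labelDist y (x i) ≤ labelDist y (x j)) :
    ∑ ω : RoundingSeed V N, dist (y (roundLabel x y N ω i)) (y (roundLabel x y N ω j)) ≤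
      Fintype.card (RoundingSeed V N) * (41 * (1 + 3 * Real.log c) *
        (dist (x i) (x j) + (labelDist y (x i) + labelDist y (x j)) / N)) := by
  set A := labelDist y (x i)
  set B := labelDist y (x j)
  set D := dist (x i) (x j)
  set H := 1 + 3 * Real.log c
  set P : ℝ := (Fintype.card (Equiv.Perm V) : ℝ)
  have hH : 1 ≤ H := by linarith [hc.log_nonneg (x i)]
  have hN' : (0 : ℝ) < N := Nat.cast_pos.2 hN
  have hP : 0 ≤ P := Nat.cast_nonneg _
  have hA0 : 0 ≤ A := labelDist_nonneg y _
  have hD0 : 0 ≤ D := dist_nonneg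
  have hBA : B ≤ D + A := by
    have := labelDist_le_dist_add y (x j) (x i)
    rwa [dist_comm] at this
  have hcard : (Fintype.card (RoundingSeed V N) : ℝ) = N * N * P := by
    simp only [RoundingSeed, Fintype.card_prod, Fintype.card_fin, P]
    push_cast
    ring
  rcases le_or_gt B (5 * D) with hB | hB
  · calc _ ≤ Fintype.card (RoundingSeed V N) • (41 * D) :=
          sum_le_card_nsmul _ _ _ fun ω _ => by linarith [dist_roundLabel_roundLabel_le x y ω i j]
      _ ≤ _ := by
          rw [nsmul_eq_mul]
          refine mul_le_mul_of_nonneg_left ?_ (Nat.cast_nonneg _)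
          nlinarith [div_nonneg (by linarith : 0 ≤ A + B) hN'.le]
  have hA : 0 < A := by linarith
  -- `B / A ≤ 5 / 4`, as `B - A ≤ D < A / 4`
  have hratio : (B - A) / A * B ≤ 5 / 4 * D := by
    rw [div_mul_eq_mul_div, div_le_iff₀ hA]
    nlinarith
  rw [Fintype.sum_prod_type]
  calc _ ≤ _ := sum_le_card_filter_mul_add fun b _ =>
        sum_dist_roundLabel_fiber_le x y hc hN b hA hij (by linarith)
    _ ≤ (3 / 2 * N * ((B - A) / A) + 1) * (N * P * (9 * B)) +
          N * (17 * H * P * (D * N + A)) := by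
        rw [card_univ, Fintype.card_fin]
        gcongr
        · exact mul_nonneg (mul_nonneg hN'.le hP) (by linarith)
        · exact card_scaleClass_ne_le hN hA hij
    _ = N * P * (27 / 2 * N * ((B - A) / A * B) + 9 * B + 17 * H * (D * N + A)) := by ring
    _ ≤ N * P * (27 / 2 * N * (5 / 4 * D) + 9 * B + 17 * H * (D * N + A)) := by gcongr
    _ ≤ N * P * (41 * H * (N * D + A + B)) := by
        gcongr
        nlinarith [mul_le_mul_of_nonneg_right hH (by positivity : 0 ≤ N * D),
          mul_le_mul_of_nonneg_right hH (by linarith : 0 ≤ B)]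
    _ = _ := by
        rw [hcard]
        field_simp
        ring

end Rounding

section Cost

variable {V ι X : Type*} [Fintype V] [LinearOrder V] [Fintype ι] [Nonempty ι] [MetricSpace X]

theorem sum_pairDist_roundLabel_le {c : ℝ} (hc : HasDoublingCovers X c) {N : ℕ} (hN : 0 < N)
    (x : V → X) (y : ι → X) {M : ℝ} (hM : ∀ i, labelDist y (x i) ≤ M) (e : Sym2 V) :
    ∑ ω : RoundingSeed V N, pairDist (fun i => y (roundLabel x y N ω i)) e ≤
      Fintype.card (RoundingSeed V N) *
        (41 * (1 + 3 * Real.log c) * (pairDist x e + 2 * M / N)) := by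
  have hH := hc.log_nonneg (y (Classical.arbitrary ι))
  induction e using Sym2.ind with
  | _ i j =>
    simp only [pairDist_mk]
    have h2M : (labelDist y (x i) + labelDist y (x j)) / N ≤ 2 * M / N := by
      gcongr
      linarith [hM i, hM j]
    rcases le_total (labelDist y (x i)) (labelDist y (x j)) with hij | hji
    · refine (sum_dist_roundLabel_le_of_le x y hc hN hij).trans ?_
      gcongr
    · simp only [dist_comm (y (roundLabel x y N _ i)), dist_comm (x i)]
      refine (sum_dist_roundLabel_le_of_le x y hc hN hji).trans ?_
      rw [add_comm (labelDist y (x j))]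
      gcongr

theorem exists_roundLabel_cost_le {c : ℝ} (hc : HasDoublingCovers X c) (E : Finset (Sym2 V))
    (q x : V → X) (y : ι → X) (hlabel : ∀ i, labelDist y (x i) ≤ 2 * dist (q i) (x i)) :
    ∃ f : V → ι, ∑ i, dist (q i) (y (f i)) + ∑ e ∈ E, pairDist (fun i => y (f i)) e ≤
      173 * (1 + 3 * Real.log c) * (∑ i, dist (q i) (x i) + ∑ e ∈ E, pairDist x e) := by
  set N := #E + 1
  set S := ∑ i, dist (q i) (x i)
  set T := ∑ e ∈ E, pairDist x e
  set H := 1 + 3 * Real.log c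
  set K : ℝ := (Fintype.card (RoundingSeed V N) : ℝ)
  have hH : 1 ≤ H := by linarith [hc.log_nonneg (y (Classical.arbitrary ι))]
  have hN : (0 : ℝ) < N := by positivity
  have hS : 0 ≤ S := sum_nonneg fun i _ => dist_nonneg
  have hT : 0 ≤ T := sum_nonneg fun e _ => pairDist_nonneg x e
  have hK : 0 ≤ K := Nat.cast_nonneg _
  have hvertex : ∀ (ω : RoundingSeed V N) i,
      dist (q i) (y (roundLabel x y N ω i)) ≤ 9 * dist (q i) (x i) := fun ω i => by
    linarith [dist_triangle (q i) (x i) (y (roundLabel x y N ω i)),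
      dist_roundLabel_le x y ω i, hlabel i]
  have hedge : ∀ e, ∑ ω : RoundingSeed V N, pairDist (fun i => y (roundLabel x y N ω i)) e ≤
      K * (41 * H * (pairDist x e + 2 * (2 * S) / N)) :=
    sum_pairDist_roundLabel_le hc (Nat.succ_pos _) x y (M := 2 * S) fun i => (hlabel i).trans <| by
      linarith [single_le_sum (f := fun i => dist (q i) (x i)) (fun i _ => dist_nonneg)
        (mem_univ i)]
  have hEN : (#E : ℝ) * (4 * S / N) ≤ 4 * S := by
    rw [mul_div_assoc']
    exact div_le_of_le_mul₀ hN.le (by positivity) (by push_cast [N]; nlinarith)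
  have htotal : ∑ ω : RoundingSeed V N, (∑ i, dist (q i) (y (roundLabel x y N ω i)) +
      ∑ e ∈ E, pairDist (fun i => y (roundLabel x y N ω i)) e) ≤
        ∑ _ω : RoundingSeed V N, 173 * H * (S + T) := by
    rw [sum_add_distrib, sum_comm, sum_comm (s := univ) (t := E), sum_const, card_univ,
      nsmul_eq_mul]
    calc _ ≤ ∑ i, K * (9 * dist (q i) (x i)) +
          ∑ e ∈ E, K * (41 * H * (pairDist x e + 2 * (2 * S) / N)) :=
          add_le_add (sum_le_sum fun i _ => (sum_le_card_nsmul _ _ _ fun ω _ =>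
            hvertex ω i).trans_eq (nsmul_eq_mul _ _)) (sum_le_sum fun e _ => hedge e)
      _ = K * (9 * S + 41 * H * (T + #E * (4 * S / N))) := by
          simp only [← mul_sum, sum_add_distrib, sum_const, nsmul_eq_mul, S, T]
          ring
      _ ≤ K * (173 * H * (S + T)) := by
          gcongr
          nlinarith
  obtain ⟨ω, -, hω⟩ := exists_le_of_sum_le univ_nonempty htotal
  exact ⟨roundLabel x y N ω, hω⟩

end Cost

end SNN

/-- there is a universal constant `C > 0` such that if `(X, dist)` has doubling
dimension at most `δ` (every ball can be covered by at most `2^δ` balls of half the radius),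
then for every SNN instance in `X` there is an assignment with values in `P̂` of SNN cost at
most `C · δ` times the optimum over `P`; i.e. the pruning gap is `O(δ)`. -/
theorem inn_pruning_gap_doubling :
    ∃ C : ℝ, 0 < C ∧
      ∀ (X : Type) [MetricSpace X] (δ : ℝ), 1 ≤ δ →
        (∀ (x : X) (R : ℝ), ∃ s : Finset X, (s.card : ℝ) ≤ (2 : ℝ) ^ δ ∧
          ∀ z ∈ Metric.ball x R, ∃ y ∈ s, z ∈ Metric.ball y (R / 2)) →
        ∀ (k : ℕ), 1 ≤ k →
          ∀ (P : Finset X), P.Nonempty →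
            ∀ (q : Fin k → X) (G : SimpleGraph (Fin k)) [Fintype G.edgeSet]
              (phat : Fin k → X), (∀ i, phat i ∈ P) →
              (∀ i, ∀ pt ∈ P, dist (q i) (phat i) ≤ dist (q i) pt) →
              ∃ p : Fin k → X, (∀ i, ∃ j, p i = phat j) ∧
                ∀ ps : Fin k → X, (∀ i, ps i ∈ P) →
                  ∑ i, dist (q i) (p i) + ∑ e ∈ G.edgeFinset, pairDist p e ≤
                    C * δ *
                      (∑ i, dist (q i) (ps i) + ∑ e ∈ G.edgeFinset, pairDist ps e) := by
  refine ⟨692, by norm_num, fun X _ δ hδ hdbl k hk P _ q G _ phat hphat hnn => ?_⟩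
  have : Nonempty (Fin k) := ⟨⟨0, hk⟩⟩
  set cost : (Fin k → X) → ℝ := fun p => ∑ i, dist (q i) (p i) + ∑ e ∈ G.edgeFinset, pairDist p e
  obtain ⟨x, -, hx⟩ := exists_min_image univ (fun x : Fin k → P => cost fun i => x i)
    ⟨fun i => ⟨phat i, hphat i⟩, mem_univ _⟩
  have hlabel : ∀ i, SNN.labelDist phat (x i : X) ≤ 2 * dist (q i) (x i) := fun i => by
    linarith [SNN.labelDist_le phat (x i : X) i, dist_triangle (x i : X) (q i) (phat i),
      hnn i _ (x i).2, dist_comm (q i) (x i : X)]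
  obtain ⟨f, hf⟩ := SNN.exists_roundLabel_cost_le hdbl G.edgeFinset q (fun i => x i) phat hlabel
  rw [Real.log_rpow two_pos] at hf
  refine ⟨fun i => phat (f i), fun i => ⟨f i, rfl⟩, fun ps hps => hf.trans ?_⟩
  have hps0 : 0 ≤ cost ps :=
    add_nonneg (sum_nonneg fun i _ => dist_nonneg) (sum_nonneg fun e _ => pairDist_nonneg ps e)
  calc 173 * (1 + 3 * (δ * Real.log 2)) * cost (fun i => x i)
      ≤ 173 * (1 + 3 * (δ * Real.log 2)) * cost ps := by
        have := Real.log_pos one_lt_two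
        gcongr
        exact hx (fun i => ⟨ps i, hps i⟩) (mem_univ _)
    _ ≤ 692 * δ * cost ps :=
        mul_le_mul_of_nonneg_right (by nlinarith [Real.log_two_lt_d9]) hps0
end

section
/- There is a universal constant C > 0 such that the following holds. Let δ > 0 and let S = P ∪ {q_1, …, q_k}, a finite metric subspace of (X, dist). Suppose S is δ-padded decomposable: for every ρ > 0 there is a finitely supported probability distribution over partitions of S into clusters each of diameter at most ρ, such that for every pair x, y ∈ S the probability that x and y lie in different clusters is at most δ · dist(x, y) / ρ. Then there exists an assignment p_1, …, p_k with all p_i ∈ P̂ whose SNN cost is at most C · δ · Cost(Q, G, P); i.e., the pruning gap is O(δ). -/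
/-!
Fix an optimal assignment `p*` over `P` and put `T = P̂`. Since `dist(p*ᵢ, T) ≤ 2 dist(qᵢ, p*ᵢ)`,
it suffices to find a map `f : S → T` moving every `z` by `O(dist(z, T))` and stretching the total
length of the edges `{p*ᵢ, p*ⱼ}` by `O(δ)`; then `p = f ∘ p*` works.
As in Lee–Naor extension, `f` sends `z` to the point of `T` nearest to its cluster in a padded
partition of `S` at scale `2ᵗ ≈ dist(z, T)`, with `t = ⌈log₂ dist(z, T) + θ⌉` for a random
shift `θ`.
An edge whose endpoints are close to `T` compared to its length is stretched by `O(1)` anyway,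
which is `O(δ)` since padded decomposability forces `δ ≥ 1` unless `S` is a single point.
Otherwise it is stretched, by `O(2ᵗ)`, only if `θ` puts its endpoints at different scales
(probability `O(length / 2ᵗ)`) or the partition cuts it (probability `≤ δ · length / 2ᵗ`).
The shift, taken on a grid `j / N`, and then the partition at each scale are fixed to values that
are no worse than the average.
-/

open Finset

/-- `S` is `δ`-padded decomposable: for every `ρ > 0` there is a finitely supported probability
distribution (weights `w` over finitely many colorings, each coloring inducing a partition of
`S` into clusters of diameter at most `ρ`) such that any two points `x, y ∈ S` are separated
with probability at most `δ · dist x y / ρ`. -/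
def PaddedDecomposable {X : Type*} [MetricSpace X] (S : Set X) (δ : ℝ) : Prop :=
  ∀ ρ : ℝ, 0 < ρ →
    ∃ (m : ℕ) (w : Fin m → ℝ) (col : Fin m → X → ℕ),
      (∀ i, 0 ≤ w i) ∧ (∑ i, w i = 1) ∧
      (∀ i, ∀ x ∈ S, ∀ y ∈ S, col i x = col i y → dist x y ≤ ρ) ∧
      (∀ x ∈ S, ∀ y ∈ S,
        (∑ i, if col i x = col i y then 0 else w i) ≤ δ * dist x y / ρ)

open Metric

theorem exists_le_sum_weight_mul {β : Type*} [Fintype β] {w : β → ℝ} (hw₀ : ∀ c, 0 ≤ w c)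
    (hw₁ : ∑ c, w c = 1) (v : β → ℝ) : ∃ c, v c ≤ ∑ c', w c' * v c' := by
  have : Nonempty β := by
    by_contra h
    simp [not_nonempty_iff.mp h] at hw₁
  obtain ⟨c, hc⟩ := Finite.exists_min v
  refine ⟨c, ?_⟩
  calc v c = ∑ c', w c' * v c := by rw [← sum_mul, hw₁, one_mul]
    _ ≤ ∑ c', w c' * v c' := sum_le_sum fun c' _ => mul_le_mul_of_nonneg_left (hc c') (hw₀ c')

theorem exists_sum_le_sum_sum_weight_mul {ι κ : Type*} {β : κ → Type*} [∀ t, Fintype (β t)]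
    {w : (t : κ) → β t → ℝ} (hw₀ : ∀ t c, 0 ≤ w t c) (hw₁ : ∀ t, ∑ c, w t c = 1)
    (s : Finset ι) (g : ι → κ) (F : (t : κ) → β t → ι → ℝ) :
    ∃ σ : (t : κ) → β t,
      ∑ e ∈ s, F (g e) (σ (g e)) e ≤ ∑ e ∈ s, ∑ c, w (g e) c * F (g e) c e := by
  classical
  choose σ hσ using fun t => exists_le_sum_weight_mul (hw₀ t) (hw₁ t)
    fun c => ∑ e ∈ s with g e = t, F t c e
  refine ⟨σ, ?_⟩
  have hg : ∀ e ∈ s, g e ∈ s.image g := fun e he => mem_image_of_mem g he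
  rw [← sum_fiberwise_of_maps_to hg, ← sum_fiberwise_of_maps_to hg]
  refine sum_le_sum fun t _ => ?_
  calc ∑ e ∈ s with g e = t, F (g e) (σ (g e)) e = ∑ e ∈ s with g e = t, F t (σ t) e :=
        sum_congr rfl fun e he => by rw [(mem_filter.1 he).2]
    _ ≤ ∑ c, w t c * ∑ e ∈ s with g e = t, F t c e := hσ t
    _ = ∑ e ∈ s with g e = t, ∑ c, w t c * F t c e := by simp only [mul_sum]; exact sum_comm
    _ = ∑ e ∈ s with g e = t, ∑ c, w (g e) c * F (g e) c e :=
        sum_congr rfl fun e he => by rw [(mem_filter.1 he).2]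

theorem card_filter_natCast_mem_Ioc_le (s : Finset ℕ) (c : ℝ) {l : ℝ} (hl : 0 ≤ l) :
    (#{j ∈ s | ((j : ℕ) : ℝ) ∈ Set.Ioc c (c + l)} : ℝ) ≤ l + 1 := by
  have hfloor : ⌊c⌋ ≤ ⌊c + l⌋ := Int.floor_le_floor (by linarith)
  have hcard : #{j ∈ s | ((j : ℕ) : ℝ) ∈ Set.Ioc c (c + l)} ≤ #(Ioc ⌊c⌋ ⌊c + l⌋) := by
    refine card_le_card_of_injOn (fun j : ℕ => (j : ℤ)) (fun j hj => ?_) fun a _ b _ h => by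
      simpa using h
    obtain ⟨hc, hcl⟩ := (mem_filter.1 hj).2
    exact mem_Ioc.2 ⟨Int.floor_lt.2 (by exact_mod_cast hc), Int.le_floor.2 (by exact_mod_cast hcl)⟩
  have htoNat : (((⌊c + l⌋ - ⌊c⌋).toNat : ℕ) : ℤ) = ⌊c + l⌋ - ⌊c⌋ := Int.toNat_of_nonneg (by omega)
  rw [Int.card_Ioc] at hcard
  have hcast : ((#{j ∈ s | ((j : ℕ) : ℝ) ∈ Set.Ioc c (c + l)} : ℕ) : ℝ) ≤ (⌊c + l⌋ : ℝ) - ⌊c⌋ := by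
    exact_mod_cast (Int.ofNat_le.2 hcard).trans htoNat.le
  linarith [Int.floor_le (c + l), Int.sub_one_lt_floor c]

theorem card_filter_ceil_add_ne_le {N : ℕ} (hN : 0 < N) {a b : ℝ} (hab : a ≤ b) :
    (#{j ∈ range N | ⌈a + (j : ℕ) / (N : ℝ)⌉ ≠ ⌈b + j / N⌉} : ℝ) ≤ 2 * (N * (b - a) + 1) := by
  have hN' : (0 : ℝ) < N := by exact_mod_cast hN
  let F (m : ℤ) : Finset ℕ :=
    {j ∈ range N | (j : ℝ) ∈ Set.Ioc (N * (m - b)) (N * (m - b) + N * (b - a))}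
  -- a bad shift `θ = j / N` puts the integer `m = ⌈a + θ⌉` in `[a + θ, b + θ)`
  have hsub : {j ∈ range N | ⌈a + (j : ℕ) / (N : ℝ)⌉ ≠ ⌈b + j / N⌉} ⊆ F ⌈a⌉ ∪ F (⌈a⌉ + 1) := by
    intro j hj
    obtain ⟨hjN, hne⟩ := mem_filter.1 hj
    have hjN' : (j : ℝ) < N := by exact_mod_cast mem_range.1 hjN
    set θ : ℝ := j / N
    have hjθ : (j : ℝ) = N * θ := (mul_div_cancel₀ _ hN'.ne').symm
    have hθ₀ : 0 ≤ θ := by positivity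
    have hθ₁ : θ < 1 := (div_lt_one hN').2 hjN'
    have hm_le : a + θ ≤ ⌈a + θ⌉ := Int.le_ceil _
    have hm_lt : (⌈a + θ⌉ : ℝ) < b + θ :=
      Int.lt_ceil.1 (lt_of_le_of_ne (Int.ceil_le_ceil (by linarith)) hne)
    have hmem : j ∈ F ⌈a + θ⌉ := by
      refine mem_filter.2 ⟨hjN, ?_, ?_⟩ <;> rw [hjθ] <;> nlinarith
    have hlo : ⌈a⌉ ≤ ⌈a + θ⌉ := Int.ceil_le_ceil (by linarith)
    have hhi : ⌈a + θ⌉ ≤ ⌈a⌉ + 1 := (Int.ceil_le_ceil (by linarith)).trans_eq (Int.ceil_add_one a)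
    rcases hlo.eq_or_lt with h | h
    · exact mem_union_left _ (h ▸ hmem)
    · exact mem_union_right _ ((show ⌈a + θ⌉ = ⌈a⌉ + 1 by omega) ▸ hmem)
  have hl : 0 ≤ (N : ℝ) * (b - a) := mul_nonneg hN'.le (by linarith)
  calc (#{j ∈ range N | ⌈a + (j : ℕ) / (N : ℝ)⌉ ≠ ⌈b + j / N⌉} : ℝ)
        ≤ #(F ⌈a⌉) + #(F (⌈a⌉ + 1)) := by
        exact_mod_cast (card_le_card hsub).trans (card_union_le _ _)
    _ ≤ (N * (b - a) + 1) + (N * (b - a) + 1) :=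
        add_le_add (card_filter_natCast_mem_Ioc_le _ _ hl) (card_filter_natCast_mem_Ioc_le _ _ hl)
    _ = 2 * (N * (b - a) + 1) := by ring

noncomputable def dyadicScale (θ r : ℝ) : ℤ := ⌈Real.logb 2 r + θ⌉

theorem le_two_zpow_dyadicScale {θ r : ℝ} (hr : 0 < r) (hθ : 0 ≤ θ) :
    r ≤ (2 : ℝ) ^ dyadicScale θ r := by
  rw [← Real.rpow_intCast, ← Real.logb_le_iff_le_rpow one_lt_two hr, dyadicScale]
  linarith [Int.le_ceil (Real.logb 2 r + θ)]

theorem two_zpow_dyadicScale_le {θ r : ℝ} (hr : 0 < r) (hθ : θ < 1) :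
    (2 : ℝ) ^ dyadicScale θ r ≤ 4 * r := by
  have hlog : Real.logb 2 (4 * r) = Real.logb 2 r + 2 := by
    rw [Real.logb_mul (by norm_num) hr.ne', add_comm, show (4 : ℝ) = 2 ^ (2 : ℝ) by norm_num,
      Real.logb_rpow two_pos one_lt_two.ne']
  rw [← Real.rpow_intCast, ← Real.le_logb_iff_rpow_le one_lt_two (by positivity), hlog, dyadicScale]
  linarith [Int.ceil_lt_add_one (Real.logb 2 r + θ)]

theorem logb_two_sub_logb_two_le {r s : ℝ} (hs : 0 < s) (hsr : s ≤ r) :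
    Real.logb 2 r - Real.logb 2 s ≤ 2 * (r - s) / s := by
  have hr : 0 < r := hs.trans_le hsr
  have hlog2 : (1 : ℝ) / 2 < Real.log 2 := by linarith [Real.log_two_gt_d9]
  have hquot : 0 ≤ r / s - 1 := by rw [sub_nonneg, one_le_div hs]; exact hsr
  rw [← Real.logb_div hr.ne' hs.ne', Real.logb, div_le_iff₀ (Real.log_pos one_lt_two)]
  calc Real.log (r / s) ≤ r / s - 1 := Real.log_le_sub_one_of_pos (by positivity)
    _ ≤ (r / s - 1) * (2 * Real.log 2) := le_mul_of_one_le_right hquot (by linarith)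
    _ = 2 * (r - s) / s * Real.log 2 := by field_simp

theorem card_filter_dyadicScale_ne_le {N : ℕ} (hN : 0 < N) {r s : ℝ} (hs : 0 < s) (hsr : s ≤ r) :
    (#{j ∈ range N | dyadicScale ((j : ℕ) / (N : ℝ)) r ≠ dyadicScale (j / N) s} : ℝ)
      ≤ 2 * (N * (2 * (r - s) / s) + 1) := by
  have hlogb := Real.logb_le_logb_of_le one_lt_two hs hsr
  calc (#{j ∈ range N | dyadicScale ((j : ℕ) / (N : ℝ)) r ≠ dyadicScale (j / N) s} : ℝ)
      = #{j ∈ range N | ⌈Real.logb 2 s + (j : ℕ) / (N : ℝ)⌉ ≠ ⌈Real.logb 2 r + j / N⌉} := by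
        unfold dyadicScale
        exact congrArg _ (congrArg _ (filter_congr fun j _ => ne_comm))
    _ ≤ 2 * (N * (Real.logb 2 r - Real.logb 2 s) + 1) := card_filter_ceil_add_ne_le hN hlogb
    _ ≤ 2 * (N * (2 * (r - s) / s) + 1) := by
        gcongr; exact logb_two_sub_logb_two_le hs hsr

theorem PaddedDecomposable.one_le {X : Type*} [MetricSpace X] {S : Set X} {δ : ℝ}
    (hS : PaddedDecomposable S δ) (hnt : S.Nontrivial) : 1 ≤ δ := by
  obtain ⟨x, hx, y, hy, hxy⟩ := hnt
  have hd : 0 < dist x y := dist_pos.2 hxy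
  by_contra! hδ
  -- at a scale `ρ ∈ (δ · dist x y, dist x y)` every partition separates `x` from `y`
  set ρ := dist x y * (1 + max δ 0) / 2
  have hρ₀ : 0 < ρ := by positivity
  have hρd : ρ < dist x y := by
    have : max δ 0 < 1 := max_lt hδ one_pos
    simp only [ρ]; nlinarith
  have hδρ : δ * dist x y < ρ := by
    have : δ < (1 + max δ 0) / 2 := by
      rcases le_total δ 0 with h | h
      · rw [max_eq_right h]; linarith
      · rw [max_eq_left h]; linarith
    simp only [ρ]; nlinarith
  obtain ⟨m, w, col, -, hw₁, hdiam, hsep⟩ := hS ρ hρ₀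
  have hsplit : ∀ c, col c x ≠ col c y := fun c h => (hdiam c x hx y hy h).not_gt hρd
  have := hsep x hx y hy
  simp only [hsplit, if_false, hw₁] at this
  rw [le_div_iff₀ hρ₀, one_mul] at this
  linarith

noncomputable def clusterRep {X α : Type*} (S : Set X) (c : X → α) (z : X) : X :=
  @Classical.epsilon X ⟨z⟩ fun y => y ∈ S ∧ c y = c z

theorem clusterRep_spec {X α : Type*} {S : Set X} (c : X → α) {z : X} (hz : z ∈ S) :
    clusterRep S c z ∈ S ∧ c (clusterRep S c z) = c z :=
  @Classical.epsilon_spec X (fun y => y ∈ S ∧ c y = c z) ⟨z, hz, rfl⟩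

theorem clusterRep_congr {X α : Type*} (S : Set X) {c : X → α} {z z' : X} (h : c z = c z') :
    clusterRep S c z = clusterRep S c z' := by
  unfold clusterRep
  rw [h]

section Retraction

variable {X : Type*} [MetricSpace X]

theorem Finset.exists_infDist_eq_dist (T : Finset X) (hT : T.Nonempty) (z : X) :
    ∃ t ∈ T, infDist z T = dist z t :=
  (T : Set X).toFinite.isCompact.exists_infDist_eq_dist (by exact_mod_cast hT) z

noncomputable def nearestPoint (T : Finset X) (hT : T.Nonempty) (z : X) : X :=
  (T.exists_infDist_eq_dist hT z).choose

theorem nearestPoint_mem (T : Finset X) (hT : T.Nonempty) (z : X) : nearestPoint T hT z ∈ T :=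
  (T.exists_infDist_eq_dist hT z).choose_spec.1

theorem dist_nearestPoint (T : Finset X) (hT : T.Nonempty) (z : X) :
    dist z (nearestPoint T hT z) = infDist z T :=
  (T.exists_infDist_eq_dist hT z).choose_spec.2.symm

noncomputable def shiftedRetraction (T : Finset X) (hT : T.Nonempty) (S : Set X) (θ : ℝ)
    (κ : ℤ → X → ℕ) (z : X) : X :=
  -- points of `T` are fixed; for them `dyadicScale θ 0` would be a junk value
  if 0 < infDist z T then
    nearestPoint T hT (clusterRep S (κ (dyadicScale θ (infDist z T))) z)
  else nearestPoint T hT z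

variable {T : Finset X} (hT : T.Nonempty) {S : Set X} {θ : ℝ} {κ : ℤ → X → ℕ}

theorem shiftedRetraction_mem (z : X) : shiftedRetraction T hT S θ κ z ∈ T := by
  unfold shiftedRetraction
  split_ifs <;> exact nearestPoint_mem _ _ _

theorem dist_shiftedRetraction_le (hθ : θ < 1)
    (hκ : ∀ t, ∀ x ∈ S, ∀ y ∈ S, κ t x = κ t y → dist x y ≤ 2 ^ t) {z : X} (hz : z ∈ S) :
    dist z (shiftedRetraction T hT S θ κ z) ≤ 9 * infDist z T := by
  unfold shiftedRetraction
  split_ifs with hpos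
  · set t := dyadicScale θ (infDist z T)
    obtain ⟨hrS, hrc⟩ := clusterRep_spec (κ t) hz
    set r := clusterRep S (κ t) z
    have hzr : dist z r ≤ 4 * infDist z T :=
      (hκ t z hz r hrS hrc.symm).trans (two_zpow_dyadicScale_le hpos hθ)
    calc dist z (nearestPoint T hT r) ≤ dist z r + infDist r T := by
          rw [← dist_nearestPoint T hT r]; exact dist_triangle _ _ _
      _ ≤ dist z r + (infDist z T + dist r z) := by
          gcongr; exact infDist_le_infDist_add_dist
      _ ≤ 9 * infDist z T := by rw [dist_comm r z]; linarith
  · rw [dist_nearestPoint]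
    linarith [infDist_nonneg (x := z) (s := (T : Set X))]

theorem shiftedRetraction_eq_of_scale_eq {x y : X} (hx : 0 < infDist x T) (hy : 0 < infDist y T)
    (hscale : dyadicScale θ (infDist x T) = dyadicScale θ (infDist y T))
    (hcol : κ (dyadicScale θ (infDist x T)) x = κ (dyadicScale θ (infDist x T)) y) :
    shiftedRetraction T hT S θ κ x = shiftedRetraction T hT S θ κ y := by
  unfold shiftedRetraction
  rw [if_pos hx, if_pos hy, clusterRep_congr S hcol, hscale]

noncomputable def pairBudget (T : Finset X) (x y : X) : ℝ :=
  9 * infDist x T + 9 * infDist y T + dist x y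

def IsFarPair (T : Finset X) (x y : X) : Prop := 20 * dist x y < max (infDist x T) (infDist y T)

open Classical in
noncomputable def shiftCost (T : Finset X) (θ : ℝ) (x y : X) : ℝ :=
  if IsFarPair T x y ∧ dyadicScale θ (infDist x T) ≠ dyadicScale θ (infDist y T) then
    pairBudget T x y
  else 0

open Classical in
noncomputable def splitCost (T : Finset X) (θ : ℝ) (c : X → ℕ) (x y : X) : ℝ :=
  if IsFarPair T x y ∧ dyadicScale θ (infDist x T) = dyadicScale θ (infDist y T) ∧ c x ≠ c y then
    pairBudget T x y
  else 0

theorem pairBudget_nonneg (x y : X) : 0 ≤ pairBudget T x y := by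
  unfold pairBudget
  linarith [infDist_nonneg (x := x) (s := (T : Set X)), infDist_nonneg (x := y) (s := (T : Set X)),
    dist_nonneg (x := x) (y := y)]

theorem pairBudget_comm (x y : X) : pairBudget T x y = pairBudget T y x := by
  unfold pairBudget; rw [dist_comm]; ring

theorem IsFarPair.symm {x y : X} (h : IsFarPair T x y) : IsFarPair T y x := by
  unfold IsFarPair at *; rwa [dist_comm, max_comm]

theorem IsFarPair.lt_infDist_left {x y : X} (h : IsFarPair T x y) :
    19 * dist x y < infDist x T := by
  have hyx : infDist y T ≤ infDist x T + dist x y := by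
    rw [dist_comm]; exact infDist_le_infDist_add_dist
  rcases max_cases (infDist x T) (infDist y T) with ⟨hmax, -⟩ | ⟨hmax, -⟩ <;>
    · unfold IsFarPair at h; rw [hmax] at h; linarith [dist_nonneg (x := x) (y := y)]

theorem IsFarPair.lt_infDist_right {x y : X} (h : IsFarPair T x y) :
    19 * dist x y < infDist y T := by
  simpa only [dist_comm] using h.symm.lt_infDist_left

theorem IsFarPair.infDist_pos_left {x y : X} (h : IsFarPair T x y) : 0 < infDist x T :=
  h.lt_infDist_left.trans_le' (by positivity)

theorem IsFarPair.infDist_pos_right {x y : X} (h : IsFarPair T x y) : 0 < infDist y T :=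
  h.lt_infDist_right.trans_le' (by positivity)

theorem shiftCost_nonneg (θ : ℝ) (x y : X) : 0 ≤ shiftCost T θ x y := by
  unfold shiftCost; split_ifs <;> simp [pairBudget_nonneg]

theorem splitCost_nonneg (θ : ℝ) (c : X → ℕ) (x y : X) : 0 ≤ splitCost T θ c x y := by
  unfold splitCost; split_ifs <;> simp [pairBudget_nonneg]

theorem shiftCost_comm (θ : ℝ) (x y : X) : shiftCost T θ x y = shiftCost T θ y x := by
  unfold shiftCost
  rw [pairBudget_comm]
  congr 1
  exact propext ⟨fun h => ⟨h.1.symm, h.2.symm⟩, fun h => ⟨h.1.symm, h.2.symm⟩⟩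

theorem dist_shiftedRetraction_le_pairBudget (hθ : θ < 1)
    (hκ : ∀ t, ∀ x ∈ S, ∀ y ∈ S, κ t x = κ t y → dist x y ≤ 2 ^ t) {x y : X} (hx : x ∈ S)
    (hy : y ∈ S) :
    dist (shiftedRetraction T hT S θ κ x) (shiftedRetraction T hT S θ κ y) ≤ pairBudget T x y := by
  have hfx := dist_shiftedRetraction_le hT hθ hκ hx
  have hfy := dist_shiftedRetraction_le hT hθ hκ hy
  rw [dist_comm] at hfx
  calc _ ≤ dist (shiftedRetraction T hT S θ κ x) x + dist x y
          + dist y (shiftedRetraction T hT S θ κ y) := dist_triangle4 _ _ _ _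
    _ ≤ pairBudget T x y := by unfold pairBudget; linarith

theorem dist_shiftedRetraction_le_add_costs (hθ : θ < 1)
    (hκ : ∀ t, ∀ x ∈ S, ∀ y ∈ S, κ t x = κ t y → dist x y ≤ 2 ^ t) {x y : X} (hx : x ∈ S)
    (hy : y ∈ S) :
    dist (shiftedRetraction T hT S θ κ x) (shiftedRetraction T hT S θ κ y) ≤
      361 * dist x y + shiftCost T θ x y
        + splitCost T θ (κ (dyadicScale θ (infDist x T))) x y := by
  have hbudget := dist_shiftedRetraction_le_pairBudget hT hθ hκ hx hy
  have hshift := shiftCost_nonneg (T := T) θ x y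
  have hsplit := splitCost_nonneg (T := T) θ (κ (dyadicScale θ (infDist x T))) x y
  have hd := dist_nonneg (x := x) (y := y)
  by_cases hfar : IsFarPair T x y
  swap
  · have hmax : max (infDist x T) (infDist y T) ≤ 20 * dist x y := not_lt.1 hfar
    have : pairBudget T x y ≤ 361 * dist x y := by
      unfold pairBudget; linarith [le_max_left (infDist x T) (infDist y T),
        le_max_right (infDist x T) (infDist y T)]
    linarith
  by_cases hscale : dyadicScale θ (infDist x T) = dyadicScale θ (infDist y T)
  swap
  · have : shiftCost T θ x y = pairBudget T x y := if_pos ⟨hfar, hscale⟩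
    linarith
  by_cases hcol : κ (dyadicScale θ (infDist x T)) x = κ (dyadicScale θ (infDist x T)) y
  · rw [shiftedRetraction_eq_of_scale_eq hT hfar.infDist_pos_left hfar.infDist_pos_right hscale
      hcol, dist_self]
    linarith
  · have : splitCost T θ (κ (dyadicScale θ (infDist x T))) x y = pairBudget T x y :=
      if_pos ⟨hfar, hscale, hcol⟩
    linarith

theorem sum_shiftCost_le {N : ℕ} (hN : 0 < N) {x y : X}
    (hbudget : 0 < dist x y → pairBudget T x y ≤ N * dist x y) :
    ∑ j ∈ range N, shiftCost T ((j : ℕ) / (N : ℝ)) x y ≤ 78 * N * dist x y := by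
  wlog hyx : infDist y T ≤ infDist x T generalizing x y
  · have := this (fun h => by rw [pairBudget_comm, dist_comm]; exact hbudget (by rwa [dist_comm]))
      (le_of_not_ge hyx)
    simpa only [shiftCost_comm, dist_comm] using this
  have hN' : (0 : ℝ) < N := by exact_mod_cast hN
  have hd := dist_nonneg (x := x) (y := y)
  by_cases hfar : IsFarPair T x y
  swap
  · simp only [shiftCost, hfar, false_and, if_false, sum_const_zero]
    positivity
  rcases hd.eq_or_lt with hd₀ | hd₀
  · obtain rfl := dist_eq_zero.1 hd₀.symm
    simp [shiftCost]
  have hy₀ := hfar.lt_infDist_right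
  have hxy : infDist x T ≤ infDist y T + dist x y := infDist_le_infDist_add_dist
  have hB : pairBudget T x y ≤ 19 * infDist y T := by unfold pairBudget; linarith
  have hB₀ := pairBudget_nonneg (T := T) x y
  have hcard := card_filter_dyadicScale_ne_le hN hfar.infDist_pos_right hyx
  have hsum : ∑ j ∈ range N, shiftCost T ((j : ℕ) / (N : ℝ)) x y =
      #{j ∈ range N | dyadicScale ((j : ℕ) / (N : ℝ)) (infDist x T) ≠
        dyadicScale (j / N) (infDist y T)} * pairBudget T x y := by
    simp only [shiftCost, hfar, true_and]
    rw [sum_ite, sum_const_zero, add_zero, sum_const, nsmul_eq_mul]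
  have hshift : (infDist x T - infDist y T) / infDist y T * pairBudget T x y ≤ dist x y * 19 := by
    rw [div_mul_eq_mul_div, div_le_iff₀ hfar.infDist_pos_right]
    nlinarith
  rw [hsum]
  calc _ ≤ 2 * (N * (2 * (infDist x T - infDist y T) / infDist y T) + 1) * pairBudget T x y :=
        mul_le_mul_of_nonneg_right hcard hB₀
    _ = 4 * N * ((infDist x T - infDist y T) / infDist y T * pairBudget T x y)
        + 2 * pairBudget T x y := by ring
    _ ≤ 4 * N * (dist x y * 19) + 2 * (N * dist x y) := by
        gcongr
        exact hbudget hd₀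
    _ = 78 * N * dist x y := by ring

theorem sum_weight_mul_splitCost_le {β : Type*} [Fintype β] {w : β → ℝ}
    (col : β → X → ℕ) {δ : ℝ} (hδ : 0 ≤ δ) (hθ : 0 ≤ θ) {x y : X}
    (hsep : ∑ c, (if col c x = col c y then 0 else w c) ≤
      δ * dist x y / 2 ^ dyadicScale θ (infDist x T)) :
    ∑ c, w c * splitCost T θ (col c) x y ≤ 19 * δ * dist x y := by
  by_cases hfar : IsFarPair T x y ∧ dyadicScale θ (infDist x T) = dyadicScale θ (infDist y T)
  swap
  · have : ∀ c, splitCost T θ (col c) x y = 0 := fun c =>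
      if_neg fun h => hfar ⟨h.1, h.2.1⟩
    simp only [this, mul_zero, sum_const_zero]
    positivity
  obtain ⟨hfar, hscale⟩ := hfar
  set t := dyadicScale θ (infDist x T)
  have ht : (0 : ℝ) < 2 ^ t := zpow_pos two_pos t
  have hx₀ := hfar.lt_infDist_left
  have hx : infDist x T ≤ 2 ^ t := le_two_zpow_dyadicScale hfar.infDist_pos_left hθ
  have hy : infDist y T ≤ 2 ^ t := by
    rw [hscale]; exact le_two_zpow_dyadicScale hfar.infDist_pos_right hθ
  have hB : pairBudget T x y ≤ 19 * 2 ^ t := by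
    unfold pairBudget; linarith [dist_nonneg (x := x) (y := y)]
  have hsum : ∑ c, w c * splitCost T θ (col c) x y =
      (∑ c, if col c x = col c y then 0 else w c) * pairBudget T x y := by
    rw [sum_mul]
    refine sum_congr rfl fun c _ => ?_
    by_cases hc : col c x = col c y
    · simp [splitCost, hc]
    · rw [splitCost, if_pos ⟨hfar, hscale, hc⟩, if_neg hc]
  rw [hsum]
  calc _ ≤ δ * dist x y / 2 ^ t * (19 * 2 ^ t) :=
        mul_le_mul hsep hB (pairBudget_nonneg x y) (by positivity)
    _ = 19 * δ * dist x y := by field_simp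

theorem exists_nat_forall_le_mul {ι : Type*} (s : Finset ι) (a b : ι → ℝ) :
    ∃ N : ℕ, 0 < N ∧ ∀ e ∈ s, 0 < b e → a e ≤ N * b e := by
  have hlarge := (Filter.eventually_all_finset s).2 fun e _ =>
    (tendsto_natCast_atTop_atTop (R := ℝ)).eventually_ge_atTop (a e / b e)
  obtain ⟨N, hN, hpos⟩ := (hlarge.and (Filter.eventually_gt_atTop 0)).exists
  exact ⟨N, hpos, fun e he hb => (div_le_iff₀ hb).1 (hN e he)⟩

theorem exists_shift_sum_shiftCost_le {ι : Type*} (T : Finset X) (s : Finset ι) (u v : ι → X) :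
    ∃ θ : ℝ, 0 ≤ θ ∧ θ < 1 ∧
      ∑ e ∈ s, shiftCost T θ (u e) (v e) ≤ 78 * ∑ e ∈ s, dist (u e) (v e) := by
  obtain ⟨N, hN, hbudget⟩ := exists_nat_forall_le_mul s (fun e => pairBudget T (u e) (v e))
    fun e => dist (u e) (v e)
  obtain ⟨j, hj, hshift⟩ : ∃ j ∈ range N, ∑ e ∈ s, shiftCost T ((j : ℕ) / (N : ℝ)) (u e) (v e)
      ≤ 78 * ∑ e ∈ s, dist (u e) (v e) := by
    refine exists_le_of_sum_le (nonempty_range_iff.2 hN.ne') ?_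
    rw [sum_comm, sum_const, card_range, nsmul_eq_mul, mul_sum, mul_sum]
    refine sum_le_sum fun e he => ?_
    calc _ ≤ 78 * N * dist (u e) (v e) := sum_shiftCost_le hN (hbudget e he)
      _ = N * (78 * dist (u e) (v e)) := by ring
  have hN' : (0 : ℝ) < N := by exact_mod_cast hN
  exact ⟨j / N, by positivity, (div_lt_one hN').2 (by exact_mod_cast mem_range.1 hj), hshift⟩

theorem exists_partitions_sum_splitCost_le {ι : Type*} {δ : ℝ} (hS : PaddedDecomposable S δ)
    (hδ : 0 ≤ δ) (T : Finset X) (hθ : 0 ≤ θ) (s : Finset ι) {u v : ι → X}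
    (hu : ∀ e ∈ s, u e ∈ S) (hv : ∀ e ∈ s, v e ∈ S) :
    ∃ κ : ℤ → X → ℕ, (∀ t, ∀ x ∈ S, ∀ y ∈ S, κ t x = κ t y → dist x y ≤ 2 ^ t) ∧
      ∑ e ∈ s, splitCost T θ (κ (dyadicScale θ (infDist (u e) T))) (u e) (v e)
        ≤ 19 * δ * ∑ e ∈ s, dist (u e) (v e) := by
  choose m w col hw₀ hw₁ hdiam hsep using fun t : ℤ => hS (2 ^ t) (zpow_pos two_pos t)
  obtain ⟨σ, hσ⟩ := exists_sum_le_sum_sum_weight_mul hw₀ hw₁ s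
    (fun e => dyadicScale θ (infDist (u e) T)) fun t c e => splitCost T θ (col t c) (u e) (v e)
  refine ⟨fun t => col t (σ t), fun t => hdiam t (σ t), ?_⟩
  rw [mul_sum]
  exact hσ.trans <| sum_le_sum fun e he =>
    sum_weight_mul_splitCost_le _ hδ hθ (hsep _ _ (hu e he) _ (hv e he))

include hT in
theorem exists_retraction_sum_dist_le {ι : Type*} {δ : ℝ} (hS : PaddedDecomposable S δ)
    (hδ : 1 ≤ δ) (s : Finset ι) {u v : ι → X} (hu : ∀ e ∈ s, u e ∈ S) (hv : ∀ e ∈ s, v e ∈ S) :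
    ∃ f : X → X, (∀ z, f z ∈ T) ∧ (∀ z ∈ S, dist z (f z) ≤ 9 * infDist z T) ∧
      ∑ e ∈ s, dist (f (u e)) (f (v e)) ≤ 458 * δ * ∑ e ∈ s, dist (u e) (v e) := by
  obtain ⟨θ, hθ₀, hθ₁, hshift⟩ := exists_shift_sum_shiftCost_le T s u v
  obtain ⟨κ, hκ, hsplit⟩ := exists_partitions_sum_splitCost_le hS (by linarith) T hθ₀ s hu hv
  refine ⟨shiftedRetraction T hT S θ κ, shiftedRetraction_mem hT,
    fun z hz => dist_shiftedRetraction_le hT hθ₁ hκ hz, ?_⟩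
  have hdist : 0 ≤ ∑ e ∈ s, dist (u e) (v e) := sum_nonneg fun _ _ => dist_nonneg
  calc _ ≤ ∑ e ∈ s, (361 * dist (u e) (v e) + shiftCost T θ (u e) (v e)
          + splitCost T θ (κ (dyadicScale θ (infDist (u e) T))) (u e) (v e)) :=
        sum_le_sum fun e he => dist_shiftedRetraction_le_add_costs hT hθ₁ hκ (hu e he) (hv e he)
    _ ≤ 361 * ∑ e ∈ s, dist (u e) (v e) + 78 * ∑ e ∈ s, dist (u e) (v e)
          + 19 * δ * ∑ e ∈ s, dist (u e) (v e) := by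
        rw [sum_add_distrib, sum_add_distrib, ← mul_sum]
        gcongr
    _ ≤ 458 * δ * ∑ e ∈ s, dist (u e) (v e) := by nlinarith

end Retraction

theorem pairDist_eq_dist_out {V X : Type*} [MetricSpace X] (p : V → X) (e : Sym2 V) :
    pairDist p e = dist (p e.out.1) (p e.out.2) := by
  conv_lhs => rw [← Quot.out_eq e]
  rfl

noncomputable def snnCost {V X : Type*} [Fintype V] [MetricSpace X] (q : V → X)
    (G : SimpleGraph V) [Fintype G.edgeSet] (p : V → X) : ℝ :=
  ∑ i, dist (q i) (p i) + ∑ e ∈ G.edgeFinset, pairDist p e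

theorem snnCost_nonneg {V X : Type*} [Fintype V] [MetricSpace X] (q : V → X)
    (G : SimpleGraph V) [Fintype G.edgeSet] (p : V → X) : 0 ≤ snnCost q G p :=
  add_nonneg (sum_nonneg fun _ _ => dist_nonneg) (sum_nonneg fun _ _ => pairDist_nonneg p _)

theorem dist_le_nineteen_mul_dist {X : Type*} [MetricSpace X] {T : Finset X} {q z t y : X}
    (hy : dist z y ≤ 9 * infDist z T) (ht : t ∈ T) (hnear : dist q t ≤ dist q z) :
    dist q y ≤ 19 * dist q z := by
  have hz : infDist z T ≤ 2 * dist q z := by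
    calc infDist z T ≤ dist z t := infDist_le_dist_of_mem (by exact_mod_cast ht)
      _ ≤ dist z q + dist q t := dist_triangle _ _ _
      _ ≤ 2 * dist q z := by rw [dist_comm z q]; linarith
  linarith [dist_triangle q z y]

theorem snnCost_eq_zero_of_subsingleton {V X : Type*} [Fintype V] [MetricSpace X] {q : V → X}
    {G : SimpleGraph V} [Fintype G.edgeSet] {p : V → X} {S : Set X} (hS : S.Subsingleton)
    (hq : ∀ i, q i ∈ S) (hp : ∀ i, p i ∈ S) : snnCost q G p = 0 := by
  have h : ∀ x ∈ S, ∀ y ∈ S, dist x y = 0 := fun x hx y hy => dist_eq_zero.2 (hS hx hy)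
  simp only [snnCost, pairDist_eq_dist_out, h _ (hq _) _ (hp _), h _ (hp _) _ (hp _),
    sum_const_zero, add_zero]

theorem snnCost_comp_le {V X : Type*} [Fintype V] [MetricSpace X] {q : V → X}
    {G : SimpleGraph V} [Fintype G.edgeSet] {p : V → X} {f : X → X} {C : ℝ} (hC : 19 ≤ C)
    (hvertices : ∀ i, dist (q i) (f (p i)) ≤ 19 * dist (q i) (p i))
    (hedges : ∑ e ∈ G.edgeFinset, dist (f (p e.out.1)) (f (p e.out.2))
      ≤ C * ∑ e ∈ G.edgeFinset, dist (p e.out.1) (p e.out.2)) :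
    snnCost q G (f ∘ p) ≤ C * snnCost q G p := by
  have hsum : ∑ i, dist (q i) (f (p i)) ≤ C * ∑ i, dist (q i) (p i) := by
    rw [mul_sum]
    exact sum_le_sum fun i _ =>
      (hvertices i).trans (mul_le_mul_of_nonneg_right hC dist_nonneg)
  simp only [snnCost, pairDist_eq_dist_out, Function.comp_apply, mul_add]
  exact add_le_add hsum hedges

/-- there is a universal constant `C > 0` such that if the finite metric subspace
`S = P ∪ {q_1, …, q_k}` is `δ`-padded decomposable, then there is an assignment with values in
`P̂` of SNN cost at most `C · δ` times the optimum over `P`; i.e. the pruning gap is `O(δ)`. -/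
theorem inn_pruning_gap_padded :
    ∃ C : ℝ, 0 < C ∧
      ∀ (X : Type) [MetricSpace X] (δ : ℝ), 0 < δ →
        ∀ (k : ℕ), 1 ≤ k →
          ∀ (P : Finset X), P.Nonempty →
            ∀ (q : Fin k → X),
              PaddedDecomposable ((P : Set X) ∪ Set.range q) δ →
              ∀ (G : SimpleGraph (Fin k)) [Fintype G.edgeSet]
                (phat : Fin k → X), (∀ i, phat i ∈ P) →
                (∀ i, ∀ pt ∈ P, dist (q i) (phat i) ≤ dist (q i) pt) →
                ∃ p : Fin k → X, (∀ i, ∃ j, p i = phat j) ∧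
                  ∀ ps : Fin k → X, (∀ i, ps i ∈ P) →
                    ∑ i, dist (q i) (p i) + ∑ e ∈ G.edgeFinset, pairDist p e ≤
                      C * δ *
                        (∑ i, dist (q i) (ps i) + ∑ e ∈ G.edgeFinset, pairDist ps e) := by
  refine ⟨458, by norm_num, fun X _ δ hδ k hk P hP q hPD G _ phat hphatP hphatNN => ?_⟩
  classical
  set S : Set X := (P : Set X) ∪ Set.range q
  have hqS : ∀ i, q i ∈ S := fun i => Or.inr ⟨i, rfl⟩
  have hPS : ∀ x ∈ P, x ∈ S := fun x hx => Or.inl hx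
  rcases S.subsingleton_or_nontrivial with hsub | hnt
  · refine ⟨phat, fun i => ⟨i, rfl⟩, fun ps _ => ?_⟩
    show snnCost q G phat ≤ 458 * δ * snnCost q G ps
    rw [snnCost_eq_zero_of_subsingleton hsub hqS fun i => hPS _ (hphatP i)]
    exact mul_nonneg (by positivity) (snnCost_nonneg q G ps)
  obtain ⟨pstar, hpstar, hopt⟩ := (Fintype.piFinset fun _ : Fin k => P).exists_min_image
    (snnCost q G) (Fintype.piFinset_nonempty.2 fun _ => hP)
  rw [Fintype.mem_piFinset] at hpstar
  have hT : (univ.image phat).Nonempty := (univ_nonempty_iff.2 ⟨⟨0, hk⟩⟩).image phat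
  have hδ₁ := hPD.one_le hnt
  obtain ⟨f, hfT, hfS, hfsum⟩ := exists_retraction_sum_dist_le hT hPD hδ₁ G.edgeFinset
    (u := fun e => pstar e.out.1) (v := fun e => pstar e.out.2)
    (fun _ _ => hPS _ (hpstar _)) (fun _ _ => hPS _ (hpstar _))
  refine ⟨f ∘ pstar, fun i => ?_, fun ps hps => ?_⟩
  · obtain ⟨j, -, hj⟩ := mem_image.1 (hfT (pstar i))
    exact ⟨j, hj.symm⟩
  show snnCost q G (f ∘ pstar) ≤ 458 * δ * snnCost q G ps
  calc snnCost q G (f ∘ pstar) ≤ 458 * δ * snnCost q G pstar :=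
        snnCost_comp_le (by linarith) (fun i => dist_le_nineteen_mul_dist
          (hfS _ (hPS _ (hpstar i))) (mem_image_of_mem phat (mem_univ i))
          (hphatNN i _ (hpstar i))) hfsum
    _ ≤ 458 * δ * snnCost q G ps := by
        gcongr; exact hopt ps (Fintype.mem_piFinset.2 hps)
end

section
/- Suppose the graph G is r-sparse (has pseudoarboricity at most r). Then for every assignment p*_1, …, p*_k ∈ P there exists an assignment p_1, …, p_k with all p_i ∈ P̂ = {p̂_1, …, p̂_k} such that Σ_{i=1}^k dist(q_i, p_i) + Σ_{{i,j}∈E} dist(p_i, p_j) ≤ (4r+3) · (Σ_{i=1}^k dist(q_i, p*_i) + Σ_{{i,j}∈E} dist(p*_i, p*_j)). In particular, the pruning gap of the Independent Nearest Neighbors algorithm on r-sparse graphs is at most 4r+3 = O(r). -/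
open Finset

/-- if `G` is `r`-sparse (witnessed by a map `f` assigning each edge to one of its
endpoints, with at most `r` edges assigned to each vertex), then for every assignment `p*` with
values in `P` there is an assignment `p` with values in the nearest-neighbor set `P̂` whose SNN
cost is at most `(4r+3)` times that of `p*`; i.e. the pruning gap of INN on `r`-sparse graphs
is at most `4r+3`. -/
theorem inn_pruning_gap_sparse
    {X : Type*} [MetricSpace X] {k : ℕ} (hk : 1 ≤ k)
    (P : Finset X) (hPne : P.Nonempty)
    (q : Fin k → X) (G : SimpleGraph (Fin k)) [Fintype G.edgeSet]
    (r : ℕ) (f : Sym2 (Fin k) → Fin k)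
    (hfEnd : ∀ e ∈ G.edgeSet, f e ∈ e)
    (hfSparse : ∀ v : Fin k, (G.edgeFinset.filter (fun e => f e = v)).card ≤ r)
    (phat : Fin k → X) (hphatP : ∀ i, phat i ∈ P)
    (hphatNN : ∀ i, ∀ pt ∈ P, dist (q i) (phat i) ≤ dist (q i) pt)
    (ps : Fin k → X) (hpsP : ∀ i, ps i ∈ P) :
    ∃ p : Fin k → X, (∀ i, ∃ j, p i = phat j) ∧
      ∑ i, dist (q i) (p i) + ∑ e ∈ G.edgeFinset, pairDist p e ≤
        (4 * (r : ℝ) + 3) *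
          (∑ i, dist (q i) (ps i) + ∑ e ∈ G.edgeFinset, pairDist ps e) := by
  classical
  set d : Fin k → ℝ := fun i => dist (q i) (ps i) with hd
  have hdnn : ∀ i, 0 ≤ d i := fun i => dist_nonneg
  -- nearest neighbor property: dist (q i) (phat i) ≤ d i
  have ha : ∀ i, dist (q i) (phat i) ≤ d i := fun i => hphatNN i (ps i) (hpsP i)
  -- hence dist (ps i) (phat i) ≤ 2 * d i
  have hps_phat : ∀ i, dist (ps i) (phat i) ≤ 2 * d i := by
    intro i
    calc dist (ps i) (phat i) ≤ dist (ps i) (q i) + dist (q i) (phat i) := dist_triangle _ _ _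
      _ ≤ d i + d i := by
          rw [dist_comm (ps i) (q i)]
          exact add_le_add le_rfl (ha i)
      _ = 2 * d i := by ring
  -- candidate sets
  have hmin : ∀ i : Fin k, ∃ j ∈ insert i ((G.edgeFinset.filter (fun e => i ∈ e)).image f),
      ∀ j' ∈ insert i ((G.edgeFinset.filter (fun e => i ∈ e)).image f),
        dist (ps i) (phat j) ≤ dist (ps i) (phat j') := by
    intro i
    exact Finset.exists_min_image _ (fun j => dist (ps i) (phat j))
      (Finset.insert_nonempty i _)
  choose g hgmem hgmin using hmin
  refine ⟨fun i => phat (g i), fun i => ⟨g i, rfl⟩, ?_⟩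
  -- fact A : dist (ps i) (phat (g i)) ≤ 2 * d i
  have hA : ∀ i, dist (ps i) (phat (g i)) ≤ 2 * d i := by
    intro i
    exact le_trans (hgmin i i (Finset.mem_insert_self _ _)) (hps_phat i)
  -- pairDist nonneg
  have hpdnn : ∀ (u : Fin k → X) (e : Sym2 (Fin k)), 0 ≤ pairDist u e := by
    intro u e
    induction e using Sym2.ind with
    | _ i j => exact dist_nonneg
  -- fact B : for any edge e and endpoint i of e,
  --   dist (ps i) (phat (g i)) ≤ 2 * d (f e) + pairDist ps e
  have hB : ∀ e ∈ G.edgeFinset, ∀ i, i ∈ e →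
      dist (ps i) (phat (g i)) ≤ 2 * d (f e) + pairDist ps e := by
    intro e he i hie
    have heS : e ∈ G.edgeSet := SimpleGraph.mem_edgeFinset.mp he
    have hfe : f e ∈ e := hfEnd e heS
    by_cases hif : f e = i
    · have := hA i
      have h0 := hpdnn ps e
      rw [hif]
      linarith
    · have hif' : i ≠ f e := fun h => hif h.symm
      have hfeT : f e ∈ insert i ((G.edgeFinset.filter (fun e => i ∈ e)).image f) :=
        Finset.mem_insert_of_mem (Finset.mem_image_of_mem f (Finset.mem_filter.mpr ⟨he, hie⟩))
      have hmm := hgmin i (f e) hfeT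
      have hee : e = s(i, f e) := (Sym2.mem_and_mem_iff hif').mp ⟨hie, hfe⟩
      have hpd : pairDist ps e = dist (ps i) (ps (f e)) := by
        conv_lhs => rw [hee]
        rfl
      have h3 : dist (ps i) (phat (f e)) ≤
          dist (ps i) (ps (f e)) + dist (ps (f e)) (q (f e)) + dist (q (f e)) (phat (f e)) :=
        dist_triangle4 _ _ _ _
      have h4 : dist (q (f e)) (phat (f e)) ≤ d (f e) := ha (f e)
      have h5 : dist (ps (f e)) (q (f e)) = d (f e) := dist_comm _ _
      rw [hpd]
      linarith
  -- edge bound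
  have hEdge : ∀ e ∈ G.edgeFinset,
      pairDist (fun i => phat (g i)) e ≤ 4 * d (f e) + 3 * pairDist ps e := by
    intro e
    induction e using Sym2.ind with
    | _ i j =>
      intro he
      have hBi := hB _ he i (Sym2.mem_mk_left i j)
      have hBj := hB _ he j (Sym2.mem_mk_right i j)
      have hpdp : pairDist (fun i => phat (g i)) s(i, j) = dist (phat (g i)) (phat (g j)) := rfl
      have hpds : pairDist ps s(i, j) = dist (ps i) (ps j) := rfl
      have htri : dist (phat (g i)) (phat (g j)) ≤
          dist (phat (g i)) (ps i) + dist (ps i) (ps j) + dist (ps j) (phat (g j)) :=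
        dist_triangle4 _ _ _ _
      have hc1 : dist (phat (g i)) (ps i) = dist (ps i) (phat (g i)) := dist_comm _ _
      rw [hpdp, hpds]
      rw [hpds] at hBi hBj
      linarith
  -- oriented sum bound
  have hOr : ∑ e ∈ G.edgeFinset, d (f e) ≤ (r : ℝ) * ∑ i, d i := by
    have key : ∑ v : Fin k, ∑ e ∈ G.edgeFinset.filter (fun e => f e = v), d (f e) =
        ∑ e ∈ G.edgeFinset, d (f e) := Finset.sum_fiberwise _ _ _
    rw [← key]
    have step : ∀ v : Fin k,
        ∑ e ∈ G.edgeFinset.filter (fun e => f e = v), d (f e) ≤ (r : ℝ) * d v := by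
      intro v
      have heq : ∑ e ∈ G.edgeFinset.filter (fun e => f e = v), d (f e) =
          ∑ e ∈ G.edgeFinset.filter (fun e => f e = v), d v := by
        refine Finset.sum_congr rfl ?_
        intro e hE
        rw [(Finset.mem_filter.mp hE).2]
      rw [heq, Finset.sum_const, nsmul_eq_mul]
      have hcard : ((G.edgeFinset.filter (fun e => f e = v)).card : ℝ) ≤ (r : ℝ) := by
        exact_mod_cast hfSparse v
      exact mul_le_mul_of_nonneg_right hcard (hdnn v)
    calc ∑ v : Fin k, ∑ e ∈ G.edgeFinset.filter (fun e => f e = v), d (f e)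
        ≤ ∑ v : Fin k, (r : ℝ) * d v := Finset.sum_le_sum fun v _ => step v
      _ = (r : ℝ) * ∑ i, d i := by rw [Finset.mul_sum]
  -- vertex sum bound
  have hV : ∑ i, dist (q i) (phat (g i)) ≤ 3 * ∑ i, d i := by
    have : ∀ i : Fin k, dist (q i) (phat (g i)) ≤ 3 * d i := by
      intro i
      have h1 : dist (q i) (phat (g i)) ≤ dist (q i) (ps i) + dist (ps i) (phat (g i)) :=
        dist_triangle _ _ _
      have h2 := hA i
      simp only [hd] at *
      linarith
    calc ∑ i, dist (q i) (phat (g i)) ≤ ∑ i, 3 * d i := Finset.sum_le_sum fun i _ => this i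
      _ = 3 * ∑ i, d i := by rw [Finset.mul_sum]
  -- edge sum bound
  have hE : ∑ e ∈ G.edgeFinset, pairDist (fun i => phat (g i)) e ≤
      4 * ((r : ℝ) * ∑ i, d i) + 3 * ∑ e ∈ G.edgeFinset, pairDist ps e := by
    calc ∑ e ∈ G.edgeFinset, pairDist (fun i => phat (g i)) e
        ≤ ∑ e ∈ G.edgeFinset, (4 * d (f e) + 3 * pairDist ps e) :=
          Finset.sum_le_sum hEdge
      _ = 4 * ∑ e ∈ G.edgeFinset, d (f e) + 3 * ∑ e ∈ G.edgeFinset, pairDist ps e := by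
          rw [Finset.sum_add_distrib, ← Finset.mul_sum, ← Finset.mul_sum]
      _ ≤ 4 * ((r : ℝ) * ∑ i, d i) + 3 * ∑ e ∈ G.edgeFinset, pairDist ps e := by
          have := hOr
          linarith
  have hDnn : (0 : ℝ) ≤ ∑ i, d i := Finset.sum_nonneg fun i _ => hdnn i
  have hCnn : (0 : ℝ) ≤ ∑ e ∈ G.edgeFinset, pairDist ps e :=
    Finset.sum_nonneg fun e _ => hpdnn ps e
  have hrnn : (0 : ℝ) ≤ (r : ℝ) := Nat.cast_nonneg r
  have hrC : (0 : ℝ) ≤ 4 * (r : ℝ) * ∑ e ∈ G.edgeFinset, pairDist ps e := by positivity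
  have hgoal : ∑ i, dist (q i) (ps i) = ∑ i, d i := rfl
  rw [hgoal]
  nlinarith [hV, hE, hDnn, hCnn, hrC]
end

section
/- Fix a vertex i and let c = c(i) be a designated neighbor of i with respect to the assignment p*_1, …, p*_k. Then dist(q_i, p̂_c) ≤ 3 · dist(q_i, p*_i). Consequently, the nearest-neighbor cost of the designated-neighbor assignment p_i = p̂_{c(i)} satisfies Σ_{i=1}^k dist(q_i, p_i) ≤ 3 · Σ_{i=1}^k dist(q_i, p*_i). -/
open Finset

/-- if `c i` is a designated neighbor of `i` (a member of the closed neighborhood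
`N[i]` minimizing `ℓ ↦ dist(p*_i, p*_ℓ) + dist(p*_ℓ, q_ℓ)`), then
`dist(q_i, p̂_{c i}) ≤ 3 · dist(q_i, p*_i)` for every vertex `i`, and consequently the
nearest-neighbor cost of the designated-neighbor assignment `p_i = p̂_{c i}` is at most three
times that of `p*`. -/
theorem designated_neighbor_nn_cost
    {X : Type*} [MetricSpace X] {k : ℕ} (hk : 1 ≤ k)
    (P : Finset X) (hPne : P.Nonempty)
    (q : Fin k → X) (G : SimpleGraph (Fin k))
    (phat : Fin k → X) (hphatP : ∀ i, phat i ∈ P)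
    (hphatNN : ∀ i, ∀ pt ∈ P, dist (q i) (phat i) ≤ dist (q i) pt)
    (ps : Fin k → X) (hpsP : ∀ i, ps i ∈ P)
    (c : Fin k → Fin k)
    (hcMem : ∀ i, c i = i ∨ G.Adj i (c i))
    (hcMin : ∀ i ℓ, (ℓ = i ∨ G.Adj i ℓ) →
      dist (ps i) (ps (c i)) + dist (ps (c i)) (q (c i)) ≤
        dist (ps i) (ps ℓ) + dist (ps ℓ) (q ℓ)) :
    (∀ i, dist (q i) (phat (c i)) ≤ 3 * dist (q i) (ps i)) ∧
      ∑ i, dist (q i) (phat (c i)) ≤ 3 * ∑ i, dist (q i) (ps i) := by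
  have key : ∀ i, dist (q i) (phat (c i)) ≤ 3 * dist (q i) (ps i) := by
    intro i
    have hmin := hcMin i i (Or.inl rfl)
    rw [dist_self, zero_add] at hmin
    have h1 : dist (q i) (phat (c i)) ≤
        dist (q i) (ps i) + dist (ps i) (ps (c i)) + dist (ps (c i)) (q (c i)) +
          dist (q (c i)) (phat (c i)) := by
      calc dist (q i) (phat (c i)) ≤ dist (q i) (q (c i)) + dist (q (c i)) (phat (c i)) :=
            dist_triangle _ _ _
        _ ≤ (dist (q i) (ps (c i)) + dist (ps (c i)) (q (c i))) + dist (q (c i)) (phat (c i)) := by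
            gcongr; exact dist_triangle _ _ _
        _ ≤ (dist (q i) (ps i) + dist (ps i) (ps (c i)) + dist (ps (c i)) (q (c i))) +
              dist (q (c i)) (phat (c i)) := by
            gcongr; exact dist_triangle _ _ _
    have h2 : dist (q (c i)) (phat (c i)) ≤ dist (q (c i)) (ps (c i)) :=
      hphatNN (c i) _ (hpsP (c i))
    have h3 : dist (q (c i)) (ps (c i)) ≤ dist (ps i) (q i) := by
      calc dist (q (c i)) (ps (c i)) = dist (ps (c i)) (q (c i)) := dist_comm _ _
        _ ≤ dist (ps i) (ps (c i)) + dist (ps (c i)) (q (c i)) := le_add_of_nonneg_left dist_nonneg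
        _ ≤ _ := hmin
    have := dist_comm (ps i) (q i)
    have := dist_comm (q i) (ps i)
    nlinarith [hmin, dist_comm (ps i) (q i)]
  refine ⟨key, ?_⟩
  calc ∑ i, dist (q i) (phat (c i)) ≤ ∑ i, 3 * dist (q i) (ps i) :=
        Finset.sum_le_sum fun i _ => key i
    _ = 3 * ∑ i, dist (q i) (ps i) := by rw [Finset.mul_sum]
end

section
/- Fix an edge {i, s} ∈ E, let c = c(i) be a designated neighbor of i and z = c(s) a designated neighbor of s, with respect to the assignment p*_1, …, p*_k. Then dist(p̂_c, p̂_z) ≤ 4 · (dist(p*_i, p*_s) + dist(q_i, p*_i)). -/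
open Finset

/-- for an edge `{i, s} ∈ E`, with `c i` a designated neighbor of `i` and `c s` a
designated neighbor of `s` (members of the closed neighborhoods minimizing
`ℓ ↦ dist(p*_·, p*_ℓ) + dist(p*_ℓ, q_ℓ)`), one has
`dist(p̂_{c i}, p̂_{c s}) ≤ 4 · (dist(p*_i, p*_s) + dist(q_i, p*_i))`. -/
theorem designated_neighbor_edge_bound
    {X : Type*} [MetricSpace X] {k : ℕ} (hk : 1 ≤ k)
    (P : Finset X) (hPne : P.Nonempty)
    (q : Fin k → X) (G : SimpleGraph (Fin k))
    (phat : Fin k → X) (hphatP : ∀ i, phat i ∈ P)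
    (hphatNN : ∀ i, ∀ pt ∈ P, dist (q i) (phat i) ≤ dist (q i) pt)
    (ps : Fin k → X) (hpsP : ∀ i, ps i ∈ P)
    (c : Fin k → Fin k)
    (hcMem : ∀ i, c i = i ∨ G.Adj i (c i))
    (hcMin : ∀ i ℓ, (ℓ = i ∨ G.Adj i ℓ) →
      dist (ps i) (ps (c i)) + dist (ps (c i)) (q (c i)) ≤
        dist (ps i) (ps ℓ) + dist (ps ℓ) (q ℓ)) :
    ∀ i s : Fin k, G.Adj i s →
      dist (phat (c i)) (phat (c s)) ≤
        4 * (dist (ps i) (ps s) + dist (q i) (ps i)) := by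
  intro i s hadj
  have h1 := hcMin i i (Or.inl rfl)
  have h2 := hcMin s i (Or.inr hadj.symm)
  have hni := hphatNN (c i) (ps (c i)) (hpsP (c i))
  have hns := hphatNN (c s) (ps (c s)) (hpsP (c s))
  have t1 : dist (phat (c i)) (phat (c s)) ≤
      dist (phat (c i)) (q (c i)) + dist (q (c i)) (ps (c i)) + dist (ps (c i)) (ps i) +
        dist (ps i) (ps s) + dist (ps s) (ps (c s)) + dist (ps (c s)) (q (c s)) +
        dist (q (c s)) (phat (c s)) := by
    calc dist (phat (c i)) (phat (c s)) ≤
        dist (phat (c i)) (q (c s)) + dist (q (c s)) (phat (c s)) := dist_triangle _ _ _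
      _ ≤ dist (phat (c i)) (ps (c s)) + dist (ps (c s)) (q (c s)) +
          dist (q (c s)) (phat (c s)) := by
            have := dist_triangle (phat (c i)) (ps (c s)) (q (c s)); linarith
      _ ≤ dist (phat (c i)) (ps s) + dist (ps s) (ps (c s)) + dist (ps (c s)) (q (c s)) +
          dist (q (c s)) (phat (c s)) := by
            have := dist_triangle (phat (c i)) (ps s) (ps (c s)); linarith
      _ ≤ dist (phat (c i)) (ps i) + dist (ps i) (ps s) + dist (ps s) (ps (c s)) +
          dist (ps (c s)) (q (c s)) + dist (q (c s)) (phat (c s)) := by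
            have := dist_triangle (phat (c i)) (ps i) (ps s); linarith
      _ ≤ dist (phat (c i)) (ps (c i)) + dist (ps (c i)) (ps i) + dist (ps i) (ps s) +
          dist (ps s) (ps (c s)) + dist (ps (c s)) (q (c s)) + dist (q (c s)) (phat (c s)) := by
            have := dist_triangle (phat (c i)) (ps (c i)) (ps i); linarith
      _ ≤ _ := by
            have := dist_triangle (phat (c i)) (q (c i)) (ps (c i)); linarith
  have e1 : dist (phat (c i)) (q (c i)) = dist (q (c i)) (phat (c i)) := dist_comm _ _
  have e2 : dist (q (c i)) (ps (c i)) = dist (ps (c i)) (q (c i)) := dist_comm _ _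
  have e3 : dist (ps (c i)) (ps i) = dist (ps i) (ps (c i)) := dist_comm _ _
  have e4 : dist (q (c s)) (phat (c s)) = dist (q (c s)) (phat (c s)) := rfl
  have e5 : dist (q (c s)) (ps (c s)) = dist (ps (c s)) (q (c s)) := dist_comm _ _
  have e6 : dist (ps s) (ps i) = dist (ps i) (ps s) := dist_comm _ _
  have e7 : dist (ps i) (q i) = dist (q i) (ps i) := dist_comm _ _
  have hd : dist (ps i) (ps i) = 0 := dist_self _
  rw [e5] at hns
  have n1 : (0:ℝ) ≤ dist (ps i) (ps (c i)) := dist_nonneg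
  have n2 : (0:ℝ) ≤ dist (ps s) (ps (c s)) := dist_nonneg
  have n3 : (0:ℝ) ≤ dist (ps i) (ps s) := dist_nonneg
  linarith
end

section
/- Suppose G is r-sparse, witnessed by a map f assigning each edge to an endpoint with at most r edges per vertex. Let p*_1, …, p*_k ∈ P be an assignment and let p_i = p̂_{c(i)} be the designated-neighbor assignment. Then the pairwise cost satisfies Σ_{{i,j}∈E} dist(p_i, p_j) ≤ 4 · Σ_{{i,j}∈E} dist(p*_i, p*_j) + 4r · Σ_{i=1}^k dist(q_i, p*_i). -/
open Finset

/-- if `G` is `r`-sparse, witnessed by a map `f` assigning each edge to one of its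
endpoints with at most `r` edges per vertex, and `p_i = p̂_{c i}` is the designated-neighbor
assignment relative to `p*`, then the pairwise cost satisfies
`Σ_{{i,j}∈E} dist(p_i, p_j) ≤ 4 · Σ_{{i,j}∈E} dist(p*_i, p*_j) + 4r · Σ_i dist(q_i, p*_i)`. -/
theorem designated_neighbor_pw_cost
    {X : Type*} [MetricSpace X] {k : ℕ} (hk : 1 ≤ k)
    (P : Finset X) (hPne : P.Nonempty)
    (q : Fin k → X) (G : SimpleGraph (Fin k)) [Fintype G.edgeSet]
    (r : ℕ) (f : Sym2 (Fin k) → Fin k)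
    (hfEnd : ∀ e ∈ G.edgeSet, f e ∈ e)
    (hfSparse : ∀ v : Fin k, (G.edgeFinset.filter (fun e => f e = v)).card ≤ r)
    (phat : Fin k → X) (hphatP : ∀ i, phat i ∈ P)
    (hphatNN : ∀ i, ∀ pt ∈ P, dist (q i) (phat i) ≤ dist (q i) pt)
    (ps : Fin k → X) (hpsP : ∀ i, ps i ∈ P)
    (c : Fin k → Fin k)
    (hcMem : ∀ i, c i = i ∨ G.Adj i (c i))
    (hcMin : ∀ i ℓ, (ℓ = i ∨ G.Adj i ℓ) →
      dist (ps i) (ps (c i)) + dist (ps (c i)) (q (c i)) ≤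
        dist (ps i) (ps ℓ) + dist (ps ℓ) (q ℓ)) :
    ∑ e ∈ G.edgeFinset, pairDist (fun i => phat (c i)) e ≤
      4 * ∑ e ∈ G.edgeFinset, pairDist ps e +
        4 * (r : ℝ) * ∑ i, dist (q i) (ps i) := by
  -- key pointwise bound: for an edge {i,j} with assigned endpoint i
  have key : ∀ i j, G.Adj i j →
      dist (phat (c i)) (phat (c j)) ≤
        3 * dist (ps i) (ps j) + 4 * dist (q i) (ps i) := by
    intro i j hij
    have h1 := dist_triangle4 (phat (c i)) (ps i) (ps j) (phat (c j))
    have h2 := dist_triangle4 (phat (c i)) (q (c i)) (ps (c i)) (ps i)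
    have h3 := dist_triangle4 (ps j) (ps (c j)) (q (c j)) (phat (c j))
    have h4 : dist (phat (c i)) (q (c i)) ≤ dist (q (c i)) (ps (c i)) := by
      rw [dist_comm]; exact hphatNN (c i) _ (hpsP _)
    have h5 : dist (q (c j)) (phat (c j)) ≤ dist (q (c j)) (ps (c j)) := by
      exact hphatNN (c j) _ (hpsP _)
    have hBi := hcMin i i (Or.inl rfl)
    have hBj := hcMin j i (Or.inr hij.symm)
    have e1 : dist (ps i) (ps i) = 0 := dist_self _
    have e2 : dist (ps i) (q i) = dist (q i) (ps i) := dist_comm _ _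
    have e3 : dist (ps j) (ps i) = dist (ps i) (ps j) := dist_comm _ _
    have e4 : dist (q (c i)) (ps (c i)) = dist (ps (c i)) (q (c i)) := dist_comm _ _
    have e5 : dist (q (c j)) (ps (c j)) = dist (ps (c j)) (q (c j)) := dist_comm _ _
    have e6 : dist (ps (c i)) (ps i) = dist (ps i) (ps (c i)) := dist_comm _ _
    have n1 : (0:ℝ) ≤ dist (ps i) (ps (c i)) := dist_nonneg
    have n2 : (0:ℝ) ≤ dist (ps j) (ps (c j)) := dist_nonneg
    linarith
  -- per-edge bound
  have perEdge : ∀ e ∈ G.edgeFinset,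
      pairDist (fun i => phat (c i)) e ≤
        3 * pairDist ps e + 4 * dist (q (f e)) (ps (f e)) := by
    intro e he
    induction e using Sym2.ind with
    | _ i j =>
      have hij : G.Adj i j := by
        rwa [SimpleGraph.mem_edgeFinset, SimpleGraph.mem_edgeSet] at he
      have hfe : f s(i, j) = i ∨ f s(i, j) = j := by
        have := hfEnd s(i, j) (by rwa [SimpleGraph.mem_edgeSet])
        rwa [Sym2.mem_iff] at this
      rcases hfe with h | h <;> rw [h] <;> simp only [pairDist, Sym2.lift_mk]
      · exact key i j hij
      · rw [dist_comm (phat (c i)), dist_comm (ps i)]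
        exact key j i hij.symm
  have hsum1 : ∑ e ∈ G.edgeFinset, pairDist (fun i => phat (c i)) e ≤
      ∑ e ∈ G.edgeFinset, (3 * pairDist ps e + 4 * dist (q (f e)) (ps (f e))) :=
    Finset.sum_le_sum perEdge
  rw [Finset.sum_add_distrib, ← Finset.mul_sum, ← Finset.mul_sum] at hsum1
  have hfiber : ∑ e ∈ G.edgeFinset, dist (q (f e)) (ps (f e)) ≤
      (r : ℝ) * ∑ i, dist (q i) (ps i) := by
    have hsplit : ∑ e ∈ G.edgeFinset, dist (q (f e)) (ps (f e)) =
        ∑ v : Fin k, ∑ e ∈ G.edgeFinset.filter (fun e => f e = v),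
          dist (q (f e)) (ps (f e)) :=
      (Finset.sum_fiberwise_of_maps_to (fun e _ => Finset.mem_univ (f e)) _).symm
    rw [hsplit, Finset.mul_sum]
    refine Finset.sum_le_sum fun v _ => ?_
    have hconst : ∑ e ∈ G.edgeFinset.filter (fun e => f e = v),
        dist (q (f e)) (ps (f e)) =
        (G.edgeFinset.filter (fun e => f e = v)).card * dist (q v) (ps v) := by
      rw [Finset.sum_congr rfl fun e he => ?_, Finset.sum_const, nsmul_eq_mul]
      rw [(Finset.mem_filter.mp he).2]
    rw [hconst]
    exact mul_le_mul_of_nonneg_right (by exact_mod_cast hfSparse v) dist_nonneg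
  have hpos : 0 ≤ ∑ e ∈ G.edgeFinset, pairDist ps e := by
    refine Finset.sum_nonneg fun e _ => ?_
    induction e using Sym2.ind with
    | _ i j => simpa [pairDist] using dist_nonneg (x := ps i) (y := ps j)
  have hdsum : 0 ≤ ∑ i, dist (q i) (ps i) :=
    Finset.sum_nonneg fun i _ => dist_nonneg
  linarith [hfiber, hsum1, hpos]
end

section
/- Let H be a graph on k vertices and c > 0, and suppose H has edge expansion at least c: for every vertex subset S with |S| ≤ k/2, the number of edges of H with exactly one endpoint in S is at least c·|S|. Then for every partition of the vertex set of H into parts each of size at most k/2, the number of edges of H whose two endpoints lie in different parts of the partition is at least c·k/2. -/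
open Finset

/-- if a graph `H` on `k` vertices has edge expansion at least `c` (every vertex
subset `S` with `|S| ≤ k/2` has at least `c·|S|` edges with exactly one endpoint in `S`), then
for every partition of the vertex set into parts of size at most `k/2`, at least `c·k/2` edges
of `H` have their two endpoints in different parts. -/
theorem expander_partition_crossing_edges
    {V : Type*} [Fintype V] [DecidableEq V] (H : SimpleGraph V)
    (k : ℕ) (hcard : Fintype.card V = k) (c : ℝ) (hc : 0 < c)
    (hexp : ∀ S : Finset V, (S.card : ℝ) ≤ (k : ℝ) / 2 →
      c * S.card ≤
        (({e ∈ H.edgeSet | (∃ u ∈ e, u ∈ S) ∧ ∃ u ∈ e, u ∉ S}.ncard : ℕ) : ℝ))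
    (Prt : Finpartition (Finset.univ : Finset V))
    (hparts : ∀ t ∈ Prt.parts, (t.card : ℝ) ≤ (k : ℝ) / 2) :
    c * k / 2 ≤
      (({e ∈ H.edgeSet | ¬ ∃ t ∈ Prt.parts, ∀ u ∈ e, u ∈ t}.ncard : ℕ) : ℝ) := by
  classical
  have hEfin : H.edgeSet.Finite := Set.toFinite _
  set Edges : Finset (Sym2 V) := hEfin.toFinset with hE
  have hmemE : ∀ e, e ∈ Edges ↔ e ∈ H.edgeSet := fun e => hEfin.mem_toFinset
  set p : Sym2 V → Prop := fun e => ¬ ∃ t ∈ Prt.parts, ∀ u ∈ e, u ∈ t with hp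
  set X : Finset (Sym2 V) := Edges.filter p with hXdef
  -- identify the target set with X
  have hsetX : {e ∈ H.edgeSet | p e} = ↑X := by
    ext e
    simp [hXdef, hmemE e, Set.mem_setOf_eq]
  have hXcard : {e ∈ H.edgeSet | p e}.ncard = X.card := by
    rw [hsetX, Set.ncard_coe_finset]
  -- identify boundary sets with finsets
  have hbd : ∀ t : Finset V,
      {e ∈ H.edgeSet | (∃ u ∈ e, u ∈ t) ∧ ∃ u ∈ e, u ∉ t}.ncard
        = (Edges.filter (fun e => (∃ u ∈ e, u ∈ t) ∧ ∃ u ∈ e, u ∉ t)).card := by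
    intro t
    rw [← Set.ncard_coe_finset]
    congr 1
    ext e
    simp only [Finset.coe_filter, hmemE, Set.mem_setOf_eq]
  -- per-edge counting
  have hcount : ∀ e ∈ Edges,
      (Prt.parts.filter (fun t => (∃ u ∈ e, u ∈ t) ∧ ∃ u ∈ e, u ∉ t)).card
        = if p e then 2 else 0 := by
    intro e he
    induction e with
    | h u v =>
      have hadj : H.Adj u v := (hmemE _).1 he
      obtain ⟨tu, htu, hu⟩ := Prt.exists_mem (mem_univ u)
      obtain ⟨tv, htv, hv⟩ := Prt.exists_mem (mem_univ v)
      by_cases hcr : p s(u, v)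
      · rw [if_pos hcr]
        have hne : tu ≠ tv := by
          intro h
          exact hcr ⟨tu, htu, by
            intro w hw
            rcases Sym2.mem_iff.1 hw with rfl | rfl
            · exact hu
            · exact h ▸ hv⟩
        have hvnu : v ∉ tu := fun h => hne (Prt.eq_of_mem_parts htu htv h hv)
        have hunv : u ∉ tv := fun h => hne (Prt.eq_of_mem_parts htu htv hu h)
        have : Prt.parts.filter (fun t => (∃ w ∈ s(u,v), w ∈ t) ∧ ∃ w ∈ s(u,v), w ∉ t)
            = {tu, tv} := by
          ext t
          simp only [mem_filter, mem_insert, mem_singleton, Sym2.mem_iff]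
          constructor
          · rintro ⟨ht, ⟨w, (rfl | rfl), hwt⟩, -⟩
            · exact Or.inl (Prt.eq_of_mem_parts ht htu hwt hu)
            · exact Or.inr (Prt.eq_of_mem_parts ht htv hwt hv)
          · rintro (rfl | rfl)
            · exact ⟨htu, ⟨u, Or.inl rfl, hu⟩, ⟨v, Or.inr rfl, hvnu⟩⟩
            · exact ⟨htv, ⟨v, Or.inr rfl, hv⟩, ⟨u, Or.inl rfl, hunv⟩⟩
        rw [this, card_insert_of_notMem (by simpa using hne), card_singleton]
      · rw [if_neg hcr]
        simp only [hp, not_not] at hcr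
        obtain ⟨t0, ht0, hall⟩ := hcr
        rw [Finset.card_eq_zero, Finset.filter_eq_empty_iff]
        rintro t ht ⟨⟨w, hw, hwt⟩, ⟨w', hw', hw't⟩⟩
        have : t = t0 := Prt.eq_of_mem_parts ht ht0 hwt (hall w hw)
        exact hw't (this ▸ hall w' hw')
  -- double counting
  have hdc : ∑ t ∈ Prt.parts,
      (Edges.filter (fun e => (∃ u ∈ e, u ∈ t) ∧ ∃ u ∈ e, u ∉ t)).card = 2 * X.card := by
    simp_rw [Finset.card_filter]
    rw [Finset.sum_comm]
    calc ∑ e ∈ Edges, ∑ t ∈ Prt.parts,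
          (if (∃ u ∈ e, u ∈ t) ∧ ∃ u ∈ e, u ∉ t then 1 else 0)
        = ∑ e ∈ Edges, (if p e then 2 else 0) := by
          refine Finset.sum_congr rfl fun e he => ?_
          rw [← hcount e he, Finset.card_filter]
      _ = 2 * X.card := by
          rw [hXdef, ← Finset.sum_filter, Finset.sum_const, smul_eq_mul, mul_comm]
  -- now the real inequality
  have hsum : c * k ≤ (2 * X.card : ℝ) := by
    have h1 : (c * k : ℝ) = ∑ t ∈ Prt.parts, c * t.card := by
      rw [← Finset.mul_sum]
      congr 1
      rw [← Nat.cast_sum]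
      norm_cast
      rw [Prt.sum_card_parts, card_univ, hcard]
    rw [h1]
    calc ∑ t ∈ Prt.parts, c * t.card
        ≤ ∑ t ∈ Prt.parts,
            ((Edges.filter (fun e => (∃ u ∈ e, u ∈ t) ∧ ∃ u ∈ e, u ∉ t)).card : ℝ) := by
          refine Finset.sum_le_sum fun t ht => ?_
          have := hexp t (hparts t ht)
          rwa [hbd t] at this
      _ = (2 * X.card : ℝ) := by
          rw [← Nat.cast_sum, hdc]; push_cast; ring
  rw [hXcard]
  linarith
end
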